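/- arXiv:2412.16994 — 9 statements merged into one kernel-verified Lean document; each statement's English description precedes it below -/
import Mathlib

section
/- Let S_n be a sum of n independent uniform ±1 random variables. Then E[|S_n|] = n · 2^{1-n} · C(n-1, ⌊(n-1)/2⌋), where C denotes the binomial coefficient. -/
/-!
Encode the outcome of `X₁, …, Xₙ` by the set `t` of indices where `Xᵢ = 1`: almost surely
exactly one pattern occurs, each with probability `2⁻ⁿ` by independence, and on pattern `t`
we have `|Sₙ| = |2 #t - n|`. Grouping the patterns by size gives
`E|Sₙ| = 2⁻ⁿ ∑ₖ C(n, k) |n - 2k|`. Since `C(n, k) (n - 2k) = n (C(n-1, k) - C(n-1, k-1))`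
telescopes and sums to `0` over all `k`, the absolute sum is twice the sum over `k ≤ n/2`,
i.e. `2 n C(n-1, ⌊n/2⌋) = 2 n C(n-1, ⌊(n-1)/2⌋)`.
-/

open MeasureTheory ProbabilityTheory Finset

theorem sum_range_choose_mul_sub_two_mul (n m : ℕ) :
    ∑ k ∈ range (m + 1), ((n + 1).choose k : ℤ) * (n + 1 - 2 * k) = (n + 1) * n.choose m := by
  induction m with
  | zero => simp
  | succ m ih =>
    have hpascal : ((n + 1).choose (m + 1) : ℤ) = n.choose m + n.choose (m + 1) := by
      exact_mod_cast Nat.choose_succ_succ n m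
    have habsorb : ((n : ℤ) + 1) * n.choose m = (n + 1).choose (m + 1) * (m + 1) := by
      exact_mod_cast Nat.add_one_mul_choose_eq n m
    rw [sum_range_succ, ih]
    push_cast
    linear_combination (↑n + 1) * hpascal + 2 * habsorb

theorem sum_range_choose_mul_abs_sub_two_mul (n : ℕ) :
    ∑ k ∈ range (n + 2), ((n + 1).choose k : ℤ) * |(n + 1 : ℤ) - 2 * k| =
      2 * (n + 1) * n.choose (n / 2) := by
  set f : ℕ → ℤ := fun k ↦ ((n + 1).choose k : ℤ) * (n + 1 - 2 * k)
  set j := (n + 1) / 2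
  have hj : j + 1 ≤ n + 2 := by omega
  have htotal : ∑ k ∈ range (n + 2), f k = 0 := by
    simp [f, sum_range_choose_mul_sub_two_mul n (n + 1)]
  have hhead : ∀ k ∈ range (j + 1), ((n + 1).choose k : ℤ) * |(n + 1 : ℤ) - 2 * k| = f k := by
    intro k hk
    rw [abs_of_nonneg (by simp at hk; omega)]
  have htail : ∀ k ∈ Ico (j + 1) (n + 2),
      ((n + 1).choose k : ℤ) * |(n + 1 : ℤ) - 2 * k| = -f k := by
    intro k hk
    rw [abs_of_nonpos (by simp at hk; omega), mul_neg]
  have hsymm : n.choose j = n.choose (n / 2) := by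
    rw [← Nat.choose_symm (by omega)]
    congr 1
    omega
  rw [← sum_range_add_sum_Ico _ hj, sum_congr rfl hhead, sum_congr rfl htail, sum_neg_distrib]
  rw [← sum_range_add_sum_Ico _ hj] at htotal
  simp only [f, sum_range_choose_mul_sub_two_mul, hsymm] at htotal ⊢
  linarith

def signVector {n : ℕ} (t : Finset (Fin n)) (i : Fin n) : ℝ := if i ∈ t then 1 else -1

theorem signVector_injective (n : ℕ) : Function.Injective (signVector (n := n)) := by
  intro s t hst
  ext i
  have := congrFun hst i
  unfold signVector at this
  split_ifs at this <;> simp_all <;> norm_num at this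

theorem eq_signVector_filter {n : ℕ} {x : Fin n → ℝ} (hx : ∀ i, x i = 1 ∨ x i = -1) :
    x = signVector {i | x i = 1} := by
  ext i
  rcases hx i with h | h <;> simp [signVector, h]

theorem sum_signVector {n : ℕ} (t : Finset (Fin n)) : ∑ i, signVector t i = 2 * #t - n := by
  have h : ∀ i, signVector t i = 2 * (if i ∈ t then 1 else 0) - 1 := fun i ↦ by
    unfold signVector
    split_ifs <;> norm_num
  simp only [h, sum_sub_distrib, ← mul_sum, sum_boole, filter_mem_eq_inter, univ_inter, sum_const,
    card_univ, Fintype.card_fin, nsmul_eq_mul, mul_one]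

theorem sum_abs_sum_signVector (n : ℕ) :
    ∑ t : Finset (Fin n), |∑ i, signVector t i| =
      ∑ k ∈ range (n + 1), n.choose k * |2 * (k : ℝ) - n| := by
  simp_rw [sum_signVector]
  rw [← powerset_univ, sum_powerset, card_univ, Fintype.card_fin]
  refine sum_congr rfl fun k _ ↦ ?_
  rw [sum_congr rfl fun t ht ↦ by rw [(mem_powersetCard.1 ht).2], sum_const, card_powersetCard,
    card_univ, Fintype.card_fin, nsmul_eq_mul]

section

variable {Ω : Type*} [MeasurableSpace Ω] {μ : Measure Ω}

theorem ae_eq_one_or_eq_neg_one [IsProbabilityMeasure μ] {Y : Ω → ℝ} (hY : Measurable Y)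
    (h : μ {ω | Y ω = 1} = 1 / 2 ∧ μ {ω | Y ω = -1} = 1 / 2) :
    ∀ᵐ ω ∂μ, Y ω = 1 ∨ Y ω = -1 := by
  have h1 : MeasurableSet {ω | Y ω = 1} := hY (measurableSet_singleton 1)
  have h2 : MeasurableSet {ω | Y ω = -1} := hY (measurableSet_singleton (-1))
  have hdisj : Disjoint {ω | Y ω = 1} {ω | Y ω = -1} :=
    Set.disjoint_left.2 fun ω (h1 : Y ω = 1) (h2 : Y ω = -1) ↦ by norm_num [h1] at h2
  rw [ae_iff_measure_eq (by simpa only [Set.ofPred_or] using (h1.union h2).nullMeasurableSet),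
    Set.ofPred_or, measure_union hdisj h2, h.1, h.2, ENNReal.add_halves, measure_univ]

variable {n : ℕ} {X : Fin n → Ω → ℝ}

theorem measure_eq_signVector (hindep : iIndepFun X μ)
    (hdist : ∀ i, μ {ω | X i ω = 1} = 1 / 2 ∧ μ {ω | X i ω = -1} = 1 / 2) (t : Finset (Fin n)) :
    μ {ω | (X · ω) = signVector t} = (1 / 2) ^ n := by
  have hinter : {ω | (X · ω) = signVector t} = ⋂ i ∈ univ, X i ⁻¹' {signVector t i} := by
    ext ω
    simp [funext_iff]
  have hcoord : ∀ i, μ (X i ⁻¹' {signVector t i}) = 1 / 2 := fun i ↦ by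
    by_cases hi : i ∈ t <;> simp [signVector, hi, Set.preimage, hdist i]
  rw [hinter, hindep.measure_inter_preimage_eq_mul _ fun i _ ↦ measurableSet_singleton _]
  simp [hcoord]

theorem integral_abs_sum_eq_sum_signVector [IsProbabilityMeasure μ]
    (hmeas : ∀ i, Measurable (X i)) (hindep : iIndepFun X μ)
    (hdist : ∀ i, μ {ω | X i ω = 1} = 1 / 2 ∧ μ {ω | X i ω = -1} = 1 / 2) :
    ∫ ω, |∑ i, X i ω| ∂μ = (1 / 2) ^ n * ∑ t : Finset (Fin n), |∑ i, signVector t i| := by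
  set A : Finset (Fin n) → Set Ω := fun t ↦ {ω | (X · ω) = signVector t}
  have hA : ∀ t, MeasurableSet (A t) := fun t ↦
    measurable_pi_lambda _ hmeas (measurableSet_singleton (signVector t))
  have hae : (fun ω ↦ |∑ i, X i ω|) =ᵐ[μ]
      fun ω ↦ ∑ t, (A t).indicator (fun _ ↦ |∑ i, signVector t i|) ω := by
    filter_upwards [ae_all_iff.2 fun i ↦ ae_eq_one_or_eq_neg_one (hmeas i) (hdist i)] with ω hω
    set t₀ : Finset (Fin n) := {i | X i ω = 1}
    have hx : (X · ω) = signVector t₀ := eq_signVector_filter hω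
    have hmem : ∀ t, ω ∈ A t ↔ t₀ = t := fun t ↦ by
      change (X · ω) = signVector t ↔ _
      rw [hx, (signVector_injective n).eq_iff]
    simp only [Set.indicator_apply, hmem, sum_ite_eq, mem_univ, if_true]
    change |∑ i, (X · ω) i| = _
    rw [hx]
  rw [integral_congr_ae hae, integral_finsetSum _ fun t _ ↦ (integrable_const _).indicator (hA t),
    mul_sum]
  refine sum_congr rfl fun t _ ↦ ?_
  rw [integral_indicator_const _ (hA t), measureReal_def, measure_eq_signVector hindep hdist t]
  simp

end

/-- For a sum `S_n` of `n` independent uniform `±1` random variables,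
`E[|S_n|] = n · 2^(1-n) · C(n-1, ⌊(n-1)/2⌋)`. -/
theorem stmt_2 {Ω : Type*} [MeasureSpace Ω] [IsProbabilityMeasure (ℙ : Measure Ω)]
    (n : ℕ) (hn : 0 < n) (X : Fin n → Ω → ℝ)
    (hmeas : ∀ i, Measurable (X i))
    (hindep : iIndepFun X ℙ)
    (hdist : ∀ i, ℙ {ω | X i ω = 1} = 1/2 ∧ ℙ {ω | X i ω = -1} = 1/2) :
    ∫ ω, |∑ i, X i ω| ∂ℙ
      = (n : ℝ) * (2 : ℝ) ^ (1 - (n : ℤ)) * (Nat.choose (n - 1) ((n - 1) / 2)) := by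
  obtain ⟨m, rfl⟩ : ∃ m, n = m + 1 := ⟨n - 1, by omega⟩
  have hbinom : ∑ k ∈ range (m + 2), ((m + 1).choose k : ℝ) * |2 * (k : ℝ) - (m + 1 : ℕ)| =
      2 * (m + 1) * m.choose (m / 2) := by
    simp_rw [abs_sub_comm (2 * _ : ℝ)]
    exact_mod_cast sum_range_choose_mul_abs_sub_two_mul m
  rw [integral_abs_sum_eq_sum_signVector hmeas hindep hdist, sum_abs_sum_signVector, hbinom,
    zpow_sub₀ two_ne_zero, zpow_one, zpow_natCast, one_div, inv_pow]
  push_cast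
  field_simp
end

section
/- There exists an n×n matrix A with entries ±1 such that for all sign vectors x, y ∈ {-1,+1}^n, ∑_{i=1}^n ∑_{j=1}^n a_{ij} x_i y_j ≤ 2(ln 2)^{1/2} · n^{3/2}. -/
open Finset Real

namespace GB

def val (b : Bool) : ℤ := if b then 1 else -1

lemma val_or (b : Bool) : val b = 1 ∨ val b = -1 := by cases b <;> simp [val]

lemma val_beq (u v : Bool) : val (u == v) = val u * val v := by
  cases u <;> cases v <;> simp [val]

lemma val_sq (u : Bool) : val u * val u = 1 := by cases u <;> simp [val]

lemma chernoff {ι : Type*} [Fintype ι] [DecidableEq ι] (hm : 0 < Fintype.card ι)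
    (K : ℤ) (hK : 0 < K) :
    (((univ : Finset (ι → Bool)).filter (fun f => K ≤ ∑ i, val (f i))).card : ℝ)
      ≤ 2 ^ (Fintype.card ι) *
        Real.exp (-(K : ℝ) ^ 2 / (2 * Fintype.card ι)) := by
  set m : ℕ := Fintype.card ι with hmdef
  set l : ℝ := (K : ℝ) / m with hl
  have hm' : (0:ℝ) < m := by exact_mod_cast hm
  have hlpos : 0 < l := div_pos (by exact_mod_cast hK) hm'
  set T := (univ : Finset (ι → Bool)).filter (fun f => K ≤ ∑ i, val (f i)) with hT
  have key : (T.card : ℝ) * Real.exp (l * K) ≤ 2 ^ m * Real.exp (m * l ^ 2 / 2) := by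
    have h1 : (T.card : ℝ) * Real.exp (l * K)
        ≤ ∑ f : ι → Bool, Real.exp (l * ∑ i, (val (f i) : ℝ)) := by
      calc (T.card : ℝ) * Real.exp (l * K) = ∑ _f ∈ T, Real.exp (l * K) := by
            rw [Finset.sum_const, nsmul_eq_mul]
        _ ≤ ∑ f ∈ T, Real.exp (l * ∑ i, (val (f i) : ℝ)) := by
            apply Finset.sum_le_sum
            intro f hf
            have hf' : (K : ℝ) ≤ ∑ i, (val (f i) : ℝ) := by
              have := (Finset.mem_filter.1 hf).2
              push_cast
              exact_mod_cast this
            exact Real.exp_le_exp.2 (mul_le_mul_of_nonneg_left hf' hlpos.le)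
        _ ≤ ∑ f : ι → Bool, Real.exp (l * ∑ i, (val (f i) : ℝ)) := by
            apply Finset.sum_le_sum_of_subset_of_nonneg (Finset.filter_subset _ _)
            intro f _ _; positivity
    have h2 : ∑ f : ι → Bool, Real.exp (l * ∑ i, (val (f i) : ℝ))
        = (Real.exp l + Real.exp (-l)) ^ m := by
      have : ∀ f : ι → Bool, Real.exp (l * ∑ i, (val (f i) : ℝ))
          = ∏ i, Real.exp (l * (val (f i) : ℝ)) := by
        intro f; rw [Finset.mul_sum, Real.exp_sum]
      simp_rw [this]
      rw [← Fintype.prod_sum (fun (_ : ι) (b : Bool) => Real.exp (l * (val b : ℝ)))]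
      have : ∀ _i : ι, ∑ b : Bool, Real.exp (l * (val b : ℝ))
          = Real.exp l + Real.exp (-l) := by
        intro i
        rw [Fintype.sum_bool]
        simp only [val, Bool.false_eq_true, if_true, if_false, Int.cast_one,
          Int.cast_neg, mul_one, mul_neg]
      rw [Finset.prod_congr rfl (fun i _ => this i), Finset.prod_const, Finset.card_univ]
    have h3 : (Real.exp l + Real.exp (-l)) ^ m ≤ 2 ^ m * Real.exp (m * l ^ 2 / 2) := by
      have hc : Real.exp l + Real.exp (-l) ≤ 2 * Real.exp (l ^ 2 / 2) := by
        have := Real.cosh_le_exp_half_sq l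
        rw [Real.cosh_eq] at this
        linarith
      calc (Real.exp l + Real.exp (-l)) ^ m ≤ (2 * Real.exp (l ^ 2 / 2)) ^ m := by
            apply pow_le_pow_left₀ (by positivity) hc
        _ = 2 ^ m * Real.exp (l ^ 2 / 2) ^ m := mul_pow _ _ _
        _ = 2 ^ m * Real.exp (m * l ^ 2 / 2) := by
            rw [← Real.exp_nat_mul]; ring_nf
    linarith
  have hexp : 0 < Real.exp (l * K) := Real.exp_pos _
  have : (T.card : ℝ) ≤ 2 ^ m * Real.exp (m * l ^ 2 / 2) * Real.exp (-(l * K)) := by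
    have h := (le_div_iff₀ hexp).2 key
    rw [Real.exp_neg, ← div_eq_mul_inv]
    exact h
  calc (T.card : ℝ) ≤ 2 ^ m * Real.exp (m * l ^ 2 / 2) * Real.exp (-(l * K)) := this
    _ = 2 ^ m * Real.exp (m * l ^ 2 / 2 + -(l * K)) := by rw [mul_assoc, ← Real.exp_add]
    _ = 2 ^ m * Real.exp (-(K : ℝ) ^ 2 / (2 * m)) := by
        congr 1
        congr 1
        rw [hl]
        field_simp
        ring

lemma val_shift : ∀ u v w : Bool, val (u == (v == w)) * val v * val w = val u := by decide

lemma beq_beq : ∀ u c : Bool, ((u == c) == c) = u := by decide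

lemma card_shift (n : ℕ) (x y : Fin n → Bool) (K : ℤ) [DecidablePred fun f : Fin n × Fin n → Bool => K ≤ ∑ p, val (f p) * val (x p.1) * val (y p.2)]
    [DecidablePred fun f : Fin n × Fin n → Bool => K ≤ ∑ p, val (f p)] :
    ((univ : Finset (Fin n × Fin n → Bool)).filter
        (fun f => K ≤ ∑ p, val (f p) * val (x p.1) * val (y p.2))).card
      = ((univ : Finset (Fin n × Fin n → Bool)).filter
        (fun f => K ≤ ∑ p, val (f p))).card := by
  have hfwd : ∀ f : Fin n × Fin n → Bool,
      ∑ p, val ((fun p => f p == (x p.1 == y p.2)) p)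
        = ∑ p, val (f p) * val (x p.1) * val (y p.2) := by
    intro f
    apply Finset.sum_congr rfl
    intro p _
    rw [val_beq, val_beq, mul_assoc]
  refine Finset.card_bij' (fun f _ => fun p => f p == (x p.1 == y p.2))
    (fun g _ => fun p => g p == (x p.1 == y p.2)) ?_ ?_ ?_ ?_
  · intro f hf
    rw [Finset.mem_filter] at hf ⊢
    refine ⟨Finset.mem_univ _, ?_⟩
    rw [hfwd f]
    exact hf.2
  · intro g hg
    rw [Finset.mem_filter] at hg ⊢
    refine ⟨Finset.mem_univ _, ?_⟩
    calc K ≤ ∑ p, val (g p) := hg.2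
      _ = ∑ p, val ((fun p => g p == (x p.1 == y p.2)) p) * val (x p.1) * val (y p.2) := by
          apply Finset.sum_congr rfl
          intro p _
          exact (val_shift (g p) (x p.1) (y p.2)).symm
  · intro f _
    funext p
    exact beq_beq (f p) _
  · intro g _
    funext p
    exact beq_beq (g p) _


lemma exists_good (n : ℕ) (hn : 0 < n) (K : ℤ) (hK0 : 0 < K)
    (t : ℝ) (ht0 : 0 ≤ t) (htK : t < K)
    (hexpval : Real.exp (-t ^ 2 / (2 * ((n : ℝ) * n))) = ((2:ℝ) ^ (2 * n))⁻¹) :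
    ∃ f : Fin n × Fin n → Bool, ∀ x y : Fin n → Bool,
      ∑ p : Fin n × Fin n, GB.val (f p) * GB.val (x p.1) * GB.val (y p.2) < K := by
  classical
  set B : Finset (Fin n × Fin n → Bool) :=
    univ.filter (fun f => ∃ xy : (Fin n → Bool) × (Fin n → Bool),
      K ≤ ∑ p : Fin n × Fin n, GB.val (f p) * GB.val (xy.1 p.1) * GB.val (xy.2 p.2)) with hB
  have hNN : Fintype.card (Fin n × Fin n) = n * n := by simp
  have hm : 0 < Fintype.card (Fin n × Fin n) := by
    rw [hNN]; positivity
  have hKt2 : t ^ 2 < (K:ℝ) ^ 2 := by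
    have hKr : t < (K:ℝ) := htK
    nlinarith
  have hn' : (0:ℝ) < (n:ℝ) * n := by positivity
  -- bound on each individual bad event
  have hsingle : ∀ xy : (Fin n → Bool) × (Fin n → Bool),
      ((univ.filter (fun f : Fin n × Fin n → Bool =>
          K ≤ ∑ p : Fin n × Fin n, GB.val (f p) * GB.val (xy.1 p.1) * GB.val (xy.2 p.2))).card : ℝ)
        < 2 ^ (n * n) * ((2:ℝ) ^ (2 * n))⁻¹ := by
    intro xy
    rw [card_shift n xy.1 xy.2 K]
    calc (((univ : Finset (Fin n × Fin n → Bool)).filter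
          (fun f => K ≤ ∑ p : Fin n × Fin n, GB.val (f p))).card : ℝ)
        ≤ 2 ^ (Fintype.card (Fin n × Fin n)) *
            Real.exp (-(K:ℝ)^2 / (2 * Fintype.card (Fin n × Fin n))) :=
          chernoff hm K hK0
      _ < 2 ^ (n * n) * Real.exp (-t ^ 2 / (2 * ((n:ℝ) * n))) := by
          rw [hNN]
          apply mul_lt_mul_of_pos_left _ (by positivity)
          apply Real.exp_lt_exp.2
          rw [div_lt_div_iff₀ (by push_cast; positivity) (by positivity)]
          push_cast
          nlinarith
      _ = 2 ^ (n * n) * ((2:ℝ) ^ (2 * n))⁻¹ := by rw [hexpval]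
  -- union bound
  have hBcard : (B.card : ℝ) < 2 ^ (n * n) := by
    have hsub : B ⊆ (univ : Finset ((Fin n → Bool) × (Fin n → Bool))).biUnion
        (fun xy => univ.filter (fun f : Fin n × Fin n → Bool =>
          K ≤ ∑ p : Fin n × Fin n, GB.val (f p) * GB.val (xy.1 p.1) * GB.val (xy.2 p.2))) := by
      intro f hf
      obtain ⟨xy, hxy⟩ := (Finset.mem_filter.1 hf).2
      exact Finset.mem_biUnion.2 ⟨xy, Finset.mem_univ _,
        Finset.mem_filter.2 ⟨Finset.mem_univ _, hxy⟩⟩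
    have h1 : (B.card : ℝ) ≤ ∑ xy : (Fin n → Bool) × (Fin n → Bool),
        ((univ.filter (fun f : Fin n × Fin n → Bool =>
          K ≤ ∑ p : Fin n × Fin n, GB.val (f p) * GB.val (xy.1 p.1) * GB.val (xy.2 p.2))).card : ℝ) := by
      have := le_trans (Finset.card_le_card hsub) (Finset.card_biUnion_le)
      exact_mod_cast this
    have hcardpairs : Fintype.card ((Fin n → Bool) × (Fin n → Bool)) = 2 ^ (2 * n) := by
      simp [Fintype.card_prod, Fintype.card_fun]
      ring
    calc (B.card : ℝ) ≤ ∑ xy : (Fin n → Bool) × (Fin n → Bool),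
        ((univ.filter (fun f : Fin n × Fin n → Bool =>
          K ≤ ∑ p : Fin n × Fin n, GB.val (f p) * GB.val (xy.1 p.1) * GB.val (xy.2 p.2))).card : ℝ) := h1
      _ < ∑ _xy : (Fin n → Bool) × (Fin n → Bool),
            (2 ^ (n * n) * ((2:ℝ) ^ (2 * n))⁻¹) := by
          apply Finset.sum_lt_sum_of_nonempty
          · exact Finset.univ_nonempty
          · intro xy _
            exact hsingle xy
      _ = 2 ^ (n * n) := by
          rw [Finset.sum_const, Finset.card_univ, hcardpairs, nsmul_eq_mul]
          push_cast
          rw [mul_comm]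
          rw [mul_assoc]
          rw [inv_mul_cancel₀ (by positivity)]
          ring
  -- extract a good f
  have : ∃ f : Fin n × Fin n → Bool, f ∉ B := by
    by_contra h
    push_neg at h
    have hBuniv : B = univ := Finset.eq_univ_iff_forall.2 h
    have : (B.card : ℝ) = 2 ^ (n * n) := by
      rw [hBuniv, Finset.card_univ]
      have : Fintype.card (Fin n × Fin n → Bool) = 2 ^ (n * n) := by
        simp [Fintype.card_fun]
      rw [this]
      push_cast
      ring
    linarith
  obtain ⟨f, hf⟩ := this
  refine ⟨f, fun x y => ?_⟩
  by_contra h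
  push_neg at h
  exact hf (Finset.mem_filter.2 ⟨Finset.mem_univ _, ⟨(x, y), h⟩⟩)

end GB

/-- Gale–Berlekamp upper bound: there exists an `n × n` matrix with `±1`
entries such that for all sign vectors `x, y ∈ {±1}ⁿ`,
`∑ᵢ∑ⱼ aᵢⱼ xᵢ yⱼ ≤ 2 √(ln 2) · n^(3/2)`. -/
theorem stmt_4 (n : ℕ) :
    ∃ a : Fin n → Fin n → ℤ, (∀ i j, a i j = 1 ∨ a i j = -1) ∧
      ∀ x y : Fin n → ℤ, (∀ i, x i = 1 ∨ x i = -1) → (∀ j, y j = 1 ∨ y j = -1) →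
        ((∑ i, ∑ j, a i j * x i * y j : ℤ) : ℝ)
          ≤ 2 * Real.sqrt (Real.log 2) * (n : ℝ) ^ ((3 : ℝ) / 2) := by
  rcases Nat.eq_zero_or_pos n with hn | hn
  · subst hn
    refine ⟨fun i j => 1, fun i => i.elim0, ?_⟩
    intro x y _ _
    simp
  · set t : ℝ := 2 * Real.sqrt (Real.log 2) * (n : ℝ) ^ ((3:ℝ)/2) with ht
    have ht0 : 0 ≤ t := by positivity
    set K : ℤ := ⌊t⌋ + 1 with hKdef
    have htK : t < (K:ℝ) := by
      rw [hKdef]; push_cast; exact Int.lt_floor_add_one t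
    have hK0 : 0 < K := by
      have : (0:ℤ) ≤ ⌊t⌋ := Int.floor_nonneg.2 ht0
      omega
    have hlog2 : (0:ℝ) ≤ Real.log 2 := Real.log_nonneg one_le_two
    have hexpval : Real.exp (-t ^ 2 / (2 * ((n:ℝ) * n))) = ((2:ℝ) ^ (2 * n))⁻¹ := by
      have h32 : ((n:ℝ) ^ ((3:ℝ)/2)) ^ (2:ℕ) = (n:ℝ) ^ (3:ℕ) := by
        rw [← Real.rpow_natCast ((n:ℝ) ^ ((3:ℝ)/2)) 2, ← Real.rpow_mul (Nat.cast_nonneg n),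
          show ((3:ℝ)/2) * ((2:ℕ):ℝ) = ((3:ℕ):ℝ) by norm_num, Real.rpow_natCast]
      have ht2 : t ^ 2 = 4 * Real.log 2 * (n:ℝ) ^ (3:ℕ) := by
        rw [ht, mul_pow, mul_pow, Real.sq_sqrt hlog2, h32]; ring
      have hnR : (0:ℝ) < (n:ℝ) := by exact_mod_cast hn
      have harg : -t ^ 2 / (2 * ((n:ℝ) * n)) = ((2 * n : ℕ) : ℝ) * (-Real.log 2) := by
        rw [ht2]; push_cast; field_simp; ring
      rw [harg, Real.exp_nat_mul, Real.exp_neg, Real.exp_log two_pos, inv_pow]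
    obtain ⟨f, hf⟩ := GB.exists_good n hn K hK0 t ht0 htK hexpval
    refine ⟨fun i j => GB.val (f (i, j)), fun i j => GB.val_or _, ?_⟩
    intro x y hx hy
    set bx : Fin n → Bool := fun i => decide (x i = 1) with hbx
    set yb : Fin n → Bool := fun j => decide (y j = 1) with hyb
    have hbxv : ∀ i, GB.val (bx i) = x i := by
      intro i; rcases hx i with h | h <;> simp [hbx, GB.val, h]
    have hybv : ∀ j, GB.val (yb j) = y j := by
      intro j; rcases hy j with h | h <;> simp [hyb, GB.val, h]
    have hsum : ∑ i, ∑ j, GB.val (f (i,j)) * x i * y j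
        = ∑ p : Fin n × Fin n, GB.val (f p) * GB.val (bx p.1) * GB.val (yb p.2) := by
      rw [Fintype.sum_prod_type]
      exact Finset.sum_congr rfl fun i _ => Finset.sum_congr rfl fun j _ => by
        rw [hbxv, hybv]
    have hlt := hf bx yb
    rw [← hsum] at hlt
    have hle : (∑ i, ∑ j, GB.val (f (i,j)) * x i * y j) ≤ ⌊t⌋ := by omega
    calc ((∑ i, ∑ j, GB.val (f (i,j)) * x i * y j : ℤ) : ℝ) ≤ (⌊t⌋ : ℝ) := by
          exact_mod_cast hle
      _ ≤ t := Int.floor_le t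
end

section
/- For every n×n matrix A with entries ±1, there exist sign vectors x, y ∈ {-1,+1}^n with ∑_{i,j} a_{ij} x_i y_j ≥ c · n^{3/2} for some absolute constant c > 0 (in fact c = (1+o(1))√(2/π)). -/
/-!
Flip the columns by uniformly random signs `y`. Each row sum `Rᵢ = ∑ⱼ aᵢⱼ yⱼ` is then a Rademacher
sum with `E Rᵢ² = n` and `E Rᵢ⁴ ≤ 3n²` (both by induction on the number of coordinates), so
Hölder's inequality `(E R²)³ ≤ (E |R|)² E R⁴` gives Khintchine's bound `E |Rᵢ| ≥ √(n/3)`.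
Some `y` therefore achieves `∑ᵢ |Rᵢ| ≥ n √(n/3)`, and taking `xᵢ = sign Rᵢ` turns this sum into
`∑ᵢⱼ aᵢⱼ xᵢ yⱼ`.
-/

open Finset

def Bool.toSign {R : Type*} [Ring R] (b : Bool) : R := if b then 1 else -1

@[simp] lemma Bool.toSign_true {R : Type*} [Ring R] : (true.toSign : R) = 1 := rfl
@[simp] lemma Bool.toSign_false {R : Type*} [Ring R] : (false.toSign : R) = -1 := rfl

@[simp, norm_cast] lemma Bool.cast_toSign {R : Type*} [Ring R] (b : Bool) :
    ((b.toSign : ℤ) : R) = b.toSign := by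
  cases b <;> simp

lemma Bool.toSign_eq_one_or {R : Type*} [Ring R] (b : Bool) :
    (b.toSign : R) = 1 ∨ (b.toSign : R) = -1 := by
  cases b <;> simp

def signedSum {n : ℕ} (w : Fin n → ℝ) (y : Fin n → Bool) : ℝ := ∑ j, w j * (y j).toSign

lemma signedSum_cons {n : ℕ} (w : Fin (n + 1) → ℝ) (b : Bool) (y : Fin n → Bool) :
    signedSum w (Fin.cons b y) = w 0 * b.toSign + signedSum (fun j => w j.succ) y := by
  simp [signedSum, Fin.sum_univ_succ]

lemma sum_cube_succ {M : Type*} [AddCommMonoid M] {n : ℕ} (f : (Fin (n + 1) → Bool) → M) :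
    ∑ y, f y = ∑ b, ∑ y, f (Fin.cons b y) := by
  rw [← Fintype.sum_prod_type']
  exact (Fintype.sum_equiv (Fin.consEquiv fun _ => Bool) _ _ fun _ => rfl).symm

lemma sum_toSign_mul_add_sq (w s : ℝ) :
    ∑ b : Bool, (w * b.toSign + s) ^ 2 = 2 * s ^ 2 + 2 * w ^ 2 := by
  simp only [Fintype.sum_bool, Bool.toSign_true, Bool.toSign_false]; ring

lemma sum_toSign_mul_add_pow_four (w s : ℝ) :
    ∑ b : Bool, (w * b.toSign + s) ^ 4 = 2 * s ^ 4 + 12 * w ^ 2 * s ^ 2 + 2 * w ^ 4 := by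
  simp only [Fintype.sum_bool, Bool.toSign_true, Bool.toSign_false]; ring

theorem sum_signedSum_sq {n : ℕ} (w : Fin n → ℝ) :
    ∑ y, signedSum w y ^ 2 = 2 ^ n * ∑ j, w j ^ 2 := by
  induction n with
  | zero => simp [signedSum]
  | succ n ih =>
    rw [sum_cube_succ, sum_comm]
    simp only [signedSum_cons, sum_toSign_mul_add_sq, sum_add_distrib, ← mul_sum, ih,
      sum_const, card_univ, Fintype.card_fin, Fin.sum_univ_succ, Fintype.card_fun,
      Fintype.card_bool, nsmul_eq_mul]
    push_cast
    ring

theorem sum_signedSum_pow_four_le {n : ℕ} (w : Fin n → ℝ) :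
    ∑ y, signedSum w y ^ 4 ≤ 3 * 2 ^ n * (∑ j, w j ^ 2) ^ 2 := by
  induction n with
  | zero => simp [signedSum]
  | succ n ih =>
    rw [sum_cube_succ, sum_comm]
    simp only [signedSum_cons, sum_toSign_mul_add_pow_four, sum_add_distrib, ← mul_sum,
      sum_signedSum_sq, sum_const, card_univ, Fintype.card_fun, Fintype.card_fin,
      Fintype.card_bool, nsmul_eq_mul, Fin.sum_univ_succ]
    have := ih fun j => w j.succ
    push_cast
    rw [pow_succ (2:ℝ) n, show w 0 ^ 4 = (w 0 ^ 2) ^ 2 by ring]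
    nlinarith [mul_nonneg (pow_nonneg zero_le_two n : (0:ℝ) ≤ 2 ^ n) (sq_nonneg (w 0 ^ 2))]

theorem sum_sq_pow_three_le {ι : Type*} (s : Finset ι) (f : ι → ℝ) :
    (∑ i ∈ s, f i ^ 2) ^ 3 ≤ (∑ i ∈ s, |f i|) ^ 2 * ∑ i ∈ s, f i ^ 4 := by
  have h₁ : (∑ i ∈ s, f i ^ 2) ^ 2 ≤ (∑ i ∈ s, |f i|) * ∑ i ∈ s, |f i| ^ 3 :=
    sum_sq_le_sum_mul_sum_of_sq_le_mul s (fun i _ => abs_nonneg _) (fun i _ => by positivity)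
      fun i _ => le_of_eq <| by rw [← sq_abs (f i)]; ring
  have h₂ : (∑ i ∈ s, |f i| ^ 3) ^ 2 ≤ (∑ i ∈ s, f i ^ 2) * ∑ i ∈ s, f i ^ 4 :=
    sum_sq_le_sum_mul_sum_of_sq_le_mul s (fun i _ => by positivity) (fun i _ => by positivity)
      fun i _ => le_of_eq <| by rw [show f i ^ 4 = (f i ^ 2) ^ 2 by ring, ← sq_abs (f i)]; ring
  set A := ∑ i ∈ s, f i ^ 2
  have hA : 0 ≤ A := sum_nonneg fun i _ => sq_nonneg _
  rcases hA.eq_or_lt with hA | hA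
  · rw [← hA]; simp only [ne_eq, OfNat.ofNat_ne_zero, not_false_eq_true, zero_pow]; positivity
  refine le_of_mul_le_mul_right ?_ hA
  calc A ^ 3 * A = (A ^ 2) ^ 2 := by ring
    _ ≤ ((∑ i ∈ s, |f i|) * ∑ i ∈ s, |f i| ^ 3) ^ 2 := pow_le_pow_left₀ (sq_nonneg A) h₁ 2
    _ = (∑ i ∈ s, |f i|) ^ 2 * (∑ i ∈ s, |f i| ^ 3) ^ 2 := by ring
    _ ≤ (∑ i ∈ s, |f i|) ^ 2 * (A * ∑ i ∈ s, f i ^ 4) := by gcongr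
    _ = _ := by ring

theorem two_pow_mul_sqrt_le_sum_abs_signedSum {n : ℕ} (w : Fin n → ℝ) :
    2 ^ n * √((∑ j, w j ^ 2) / 3) ≤ ∑ y, |signedSum w y| := by
  set T := ∑ j, w j ^ 2
  set S := ∑ y, |signedSum w y|
  have hT : 0 ≤ T := sum_nonneg fun j _ => sq_nonneg _
  have hS : 0 ≤ S := sum_nonneg fun y _ => abs_nonneg _
  have key : (2 ^ n * T) ^ 3 ≤ S ^ 2 * (3 * 2 ^ n * T ^ 2) := by
    rw [← sum_signedSum_sq]
    exact (sum_sq_pow_three_le _ _).trans (by gcongr; exact sum_signedSum_pow_four_le w)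
  refine (pow_le_pow_iff_left₀ (by positivity) hS two_ne_zero).mp ?_
  rw [mul_pow, Real.sq_sqrt (by positivity)]
  rcases hT.eq_or_lt with hT | hT
  · rw [← hT]; simpa using sq_nonneg S
  have : 0 < 3 * (2:ℝ) ^ n * T ^ 2 := by positivity
  nlinarith

theorem exists_sum_sqrt_le_sum_abs_signedSum {ι : Type*} [Fintype ι] {n : ℕ}
    (w : ι → Fin n → ℝ) :
    ∃ y, ∑ i, √((∑ j, w i j ^ 2) / 3) ≤ ∑ i, |signedSum (w i) y| := by
  suffices h : ∑ _y : Fin n → Bool, ∑ i, √((∑ j, w i j ^ 2) / 3)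
      ≤ ∑ y, ∑ i, |signedSum (w i) y| by
    obtain ⟨y, -, hy⟩ := exists_le_of_sum_le univ_nonempty h
    exact ⟨y, hy⟩
  rw [sum_const, card_univ, Fintype.card_fun, Fintype.card_bool, Fintype.card_fin, nsmul_eq_mul,
    mul_sum, sum_comm]
  push_cast
  exact sum_le_sum fun i _ => two_pow_mul_sqrt_le_sum_abs_signedSum (w i)

theorem exists_signs_sum_eq_sum_abs {ι κ : Type*} [Fintype ι] [Fintype κ] (a : ι → κ → ℤ)
    (y : κ → ℤ) :
    ∃ x : ι → ℤ, (∀ i, x i = 1 ∨ x i = -1) ∧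
      ∑ i, ∑ j, a i j * x i * y j = ∑ i, |∑ j, a i j * y j| := by
  set R : ι → ℤ := fun i => ∑ j, a i j * y j
  refine ⟨fun i => if 0 ≤ R i then 1 else -1, fun i => by dsimp only; split_ifs <;> simp, ?_⟩
  refine sum_congr rfl fun i _ => ?_
  have hrow : ∑ j, a i j * (if 0 ≤ R i then 1 else -1) * y j
      = (if 0 ≤ R i then 1 else -1) * R i := by
    rw [mul_sum]
    exact sum_congr rfl fun j _ => by ring
  rw [hrow]
  split_ifs with h
  · rw [one_mul, abs_of_nonneg h]
  · rw [abs_of_neg (not_le.mp h)]; ring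

theorem exists_signs_sum_sqrt_le {ι : Type*} [Fintype ι] {n : ℕ} (a : ι → Fin n → ℤ) :
    ∃ (x : ι → ℤ) (y : Fin n → ℤ), (∀ i, x i = 1 ∨ x i = -1) ∧ (∀ j, y j = 1 ∨ y j = -1) ∧
      ∑ i, √((∑ j, (a i j : ℝ) ^ 2) / 3) ≤ ((∑ i, ∑ j, a i j * x i * y j : ℤ) : ℝ) := by
  obtain ⟨y, hy⟩ := exists_sum_sqrt_le_sum_abs_signedSum fun i j => (a i j : ℝ)
  obtain ⟨x, hx, hsum⟩ := exists_signs_sum_eq_sum_abs a fun j => (y j).toSign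
  refine ⟨x, fun j => (y j).toSign, hx, fun j => (y j).toSign_eq_one_or, ?_⟩
  rw [hsum]
  push_cast
  exact hy

/-- Gale–Berlekamp lower bound (Brown–Spencer): there is an absolute constant
`c > 0` such that for every `n` and every `n × n` matrix with `±1` entries
there exist sign vectors `x, y ∈ {±1}ⁿ` with
`∑ᵢ∑ⱼ aᵢⱼ xᵢ yⱼ ≥ c · n^(3/2)`. -/
theorem stmt_5 :
    ∃ c : ℝ, 0 < c ∧ ∀ (n : ℕ) (a : Fin n → Fin n → ℤ),
      (∀ i j, a i j = 1 ∨ a i j = -1) →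
      ∃ x y : Fin n → ℤ, (∀ i, x i = 1 ∨ x i = -1) ∧ (∀ j, y j = 1 ∨ y j = -1) ∧
        c * (n : ℝ) ^ ((3 : ℝ) / 2)
          ≤ ((∑ i, ∑ j, a i j * x i * y j : ℤ) : ℝ) := by
  refine ⟨1 / √3, by positivity, fun n a ha => ?_⟩
  obtain ⟨x, y, hx, hy, h⟩ := exists_signs_sum_sqrt_le a
  refine ⟨x, y, hx, hy, le_of_eq_of_le ?_ h⟩
  have hsq (i j : Fin n) : (a i j : ℝ) ^ 2 = 1 := by rcases ha i j with h | h <;> simp [h]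
  have hpow : (n : ℝ) ^ ((3 : ℝ) / 2) = n * √n := by
    rw [show (3 : ℝ) / 2 = 1 + 1 / 2 by norm_num, Real.rpow_add' (Nat.cast_nonneg n) (by norm_num),
      Real.rpow_one, Real.sqrt_eq_rpow]
  simp only [hsq, sum_const, card_univ, Fintype.card_fin, nsmul_eq_mul, mul_one, hpow,
    Real.sqrt_div' _ (zero_le_three : (0:ℝ) ≤ 3)]
  ring
end

section
/- Let H be the X-shaped board inscribed in the n×n grid (the union of the two diagonals), with the 2n row and column switches. Then the maximum discrepancy of H equals n: for every ±1 assignment on H there exist switch settings achieving discrepancy at least n, and there is an assignment for which no switch setting exceeds n. -/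
/-!
Row `i` meets the board in `{i, i.rev}`, and rows `i`, `i.rev` together carry one 4-cycle (or
the centre). For fixed column switches `y`, the best row switches make the discrepancy
`∑ i, |R i|`, with `R i` the switched sum of row `i`. Summing `|R i| + |R i.rev|` over all `i`
counts every row twice, so it suffices to bound this quantity by `2` from the appropriate side:
from below by aligning, for `i ≤ i.rev`, the columns with row `i`; from above, for every `y`, when
each 4-cycle carries a single `-1`.
-/

/-- The X-shaped board inscribed in the `n × n` grid (union of the two
diagonals), 0-indexed: `(i,j)` with `j = i` or `i + j = n - 1`. -/
def xBoard (n : ℕ) : Finset (Fin n × Fin n) :=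
  Finset.univ.filter (fun p => p.2 = p.1 ∨ (p.1 : ℕ) + (p.2 : ℕ) = n - 1)

open Finset

section Pairing

variable {R : Type*} [CommRing R] {n : ℕ}

lemma sum_add_rev_eq_two_mul_sum (b : Fin n → R) : ∑ i, (b i + b i.rev) = 2 * ∑ i, b i := by
  rw [sum_add_distrib, ← Equiv.sum_comp Fin.revPerm (fun i => b i.rev)]
  simp only [Fin.revPerm_apply, Fin.rev_rev]
  ring

variable [LinearOrder R] [IsStrictOrderedRing R]

lemma forall_of_forall_le_rev {P : Fin n → Fin n → Prop} (hP : ∀ i j, P i j → P j i)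
    (h : ∀ i, i ≤ i.rev → P i i.rev) (i : Fin n) : P i i.rev := by
  rcases le_total i i.rev with hi | hi
  · exact h i hi
  · simpa using hP _ _ (h i.rev (by simpa using hi))

lemma natCast_le_sum_of_two_le_add_rev {b : Fin n → R}
    (h : ∀ i, i ≤ i.rev → 2 ≤ b i + b i.rev) : (n : R) ≤ ∑ i, b i := by
  have hall := forall_of_forall_le_rev (P := fun i j => 2 ≤ b i + b j)
    (fun _ _ hij => by rwa [add_comm]) h
  have := sum_le_sum fun i (_ : i ∈ univ) => hall i
  rw [sum_add_rev_eq_two_mul_sum, sum_const, card_univ, Fintype.card_fin, nsmul_eq_mul] at this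
  linarith

lemma sum_le_natCast_of_add_rev_le_two {b : Fin n → R}
    (h : ∀ i, i ≤ i.rev → b i + b i.rev ≤ 2) : ∑ i, b i ≤ n := by
  have hall := forall_of_forall_le_rev (P := fun i j => b i + b j ≤ 2)
    (fun _ _ hij => by rwa [add_comm]) h
  have := sum_le_sum fun i (_ : i ∈ univ) => hall i
  rw [sum_add_rev_eq_two_mul_sum, sum_const, card_univ, Fintype.card_fin, nsmul_eq_mul] at this
  linarith

end Pairing

section Board

variable {n : ℕ}

lemma mem_xBoard {i j : Fin n} : (i, j) ∈ xBoard n ↔ j = i ∨ j = i.rev := by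
  simp only [xBoard, mem_filter, mem_univ, true_and, Fin.ext_iff, Fin.val_rev]
  omega

lemma sum_xBoard {M : Type*} [AddCommMonoid M] (f : Fin n × Fin n → M) :
    ∑ p ∈ xBoard n, f p = ∑ i, ∑ j ∈ {i, i.rev}, f (i, j) :=
  sum_finset_product _ _ _ fun p => by simp [← mem_xBoard]

def rowSum (a : Fin n × Fin n → ℤ) (y : Fin n → ℤ) (i : Fin n) : ℤ :=
  ∑ j ∈ {i, i.rev}, a (i, j) * y j

lemma sum_xBoard_eq_sum_mul_rowSum (a : Fin n × Fin n → ℤ) (x y : Fin n → ℤ) :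
    ∑ p ∈ xBoard n, a p * x p.1 * y p.2 = ∑ i, x i * rowSum a y i := by
  simp only [sum_xBoard, rowSum, mul_sum]
  exact sum_congr rfl fun i _ => sum_congr rfl fun j _ => by ring

lemma rowSum_of_rev_eq {a : Fin n × Fin n → ℤ} {y : Fin n → ℤ} {i : Fin n} (h : i.rev = i) :
    rowSum a y i = a (i, i) * y i := by
  simp [rowSum, h]

lemma rowSum_of_ne_rev {a : Fin n × Fin n → ℤ} {y : Fin n → ℤ} {i : Fin n} (h : i ≠ i.rev) :
    rowSum a y i = a (i, i) * y i + a (i, i.rev) * y i.rev :=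
  sum_pair h

lemma mul_le_abs_of_eq_one_or_eq_neg_one {s : ℤ} (hs : s = 1 ∨ s = -1) (r : ℤ) : s * r ≤ |r| := by
  rcases hs with rfl | rfl
  · simpa using le_abs_self r
  · simpa using neg_le_abs r

end Board

section LowerBound

variable {n : ℕ} {a : Fin n × Fin n → ℤ}

/-- Column `j` is switched to make the entry in row `min j j.rev` equal to `1`, so that every
row `i ≤ i.rev` becomes all ones. -/
def alignColumns (a : Fin n × Fin n → ℤ) (j : Fin n) : ℤ := a (min j j.rev, j)

lemma min_rev_mem_xBoard (j : Fin n) : (min j j.rev, j) ∈ xBoard n := by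
  rw [mem_xBoard]
  rcases min_choice j j.rev with h | h <;> simp [h]

lemma rowSum_alignColumns (ha : ∀ p ∈ xBoard n, a p = 1 ∨ a p = -1) {i : Fin n}
    (hi : i ≤ i.rev) : rowSum a (alignColumns a) i = #{i, i.rev} := by
  rw [rowSum, card_eq_sum_ones, Nat.cast_sum]
  refine sum_congr rfl fun j hj => ?_
  have hj' : j = i ∨ j = i.rev := by simpa using hj
  have hmin : min j j.rev = i := by rcases hj' with rfl | rfl <;> simp [hi]
  rw [alignColumns, hmin]
  rcases ha _ (mem_xBoard.2 hj') with h | h <;> simp [h]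

lemma two_le_abs_rowSum_alignColumns (ha : ∀ p ∈ xBoard n, a p = 1 ∨ a p = -1) {i : Fin n}
    (hi : i ≤ i.rev) :
    2 ≤ |rowSum a (alignColumns a) i| + |rowSum a (alignColumns a) i.rev| := by
  have hrow := rowSum_alignColumns ha hi
  rcases hi.lt_or_eq with hlt | heq
  · rw [hrow, card_pair hlt.ne]
    simp
  · rw [← heq, pair_eq_singleton] at hrow
    rw [← heq, hrow]
    simp

theorem exists_natCast_le_sum_xBoard (a : Fin n × Fin n → ℤ)
    (ha : ∀ p ∈ xBoard n, a p = 1 ∨ a p = -1) :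
    ∃ x y : Fin n → ℤ, (∀ i, x i = 1 ∨ x i = -1) ∧ (∀ j, y j = 1 ∨ y j = -1) ∧
      (n : ℤ) ≤ ∑ p ∈ xBoard n, a p * x p.1 * y p.2 := by
  set y := alignColumns a
  set x : Fin n → ℤ := fun i => if 0 ≤ rowSum a y i then 1 else -1
  have hx : ∀ i, x i * rowSum a y i = |rowSum a y i| := fun i => by
    by_cases h : 0 ≤ rowSum a y i
    · simp [x, h, abs_of_nonneg h]
    · simp [x, h, abs_of_neg (not_le.1 h)]
  refine ⟨x, y, fun i => ?_, fun j => ha _ (min_rev_mem_xBoard j), ?_⟩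
  · by_cases h : 0 ≤ rowSum a y i <;> simp [x, h]
  · rw [sum_xBoard_eq_sum_mul_rowSum]
    simp only [hx]
    exact natCast_le_sum_of_two_le_add_rev fun i hi => two_le_abs_rowSum_alignColumns ha hi

end LowerBound

section UpperBound

variable {n : ℕ}

/-- Every 4-cycle of the board gets exactly one `-1`, at `(i.rev, i)` for `i < i.rev`. -/
def triangularSigns (n : ℕ) (p : Fin n × Fin n) : ℤ := if p.2 < p.1 then -1 else 1

lemma abs_rowSum_triangularSigns_add_rev {y : Fin n → ℤ} (hy : ∀ j, y j = 1 ∨ y j = -1)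
    {i : Fin n} (hi : i ≤ i.rev) :
    |rowSum (triangularSigns n) y i| + |rowSum (triangularSigns n) y i.rev| = 2 := by
  rcases hi.lt_or_eq with hlt | heq
  · have hne : i.rev ≠ i.rev.rev := by simpa using hlt.ne'
    rw [rowSum_of_ne_rev hlt.ne, rowSum_of_ne_rev hne, Fin.rev_rev]
    simp only [triangularSigns, lt_irrefl, hlt, not_lt_of_gt hlt, if_true, if_false]
    rcases hy i with h | h <;> rcases hy i.rev with h' | h' <;> simp [h, h']
  · rw [← heq, rowSum_of_rev_eq heq.symm]
    rcases hy i with h | h <;> simp [triangularSigns, h]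

theorem sum_xBoard_triangularSigns_le {x y : Fin n → ℤ} (hx : ∀ i, x i = 1 ∨ x i = -1)
    (hy : ∀ j, y j = 1 ∨ y j = -1) :
    ∑ p ∈ xBoard n, triangularSigns n p * x p.1 * y p.2 ≤ n :=
  calc ∑ p ∈ xBoard n, triangularSigns n p * x p.1 * y p.2
      = ∑ i, x i * rowSum (triangularSigns n) y i := sum_xBoard_eq_sum_mul_rowSum _ _ _
    _ ≤ ∑ i, |rowSum (triangularSigns n) y i| :=
      sum_le_sum fun i _ => mul_le_abs_of_eq_one_or_eq_neg_one (hx i) _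
    _ ≤ n := sum_le_natCast_of_add_rev_le_two fun _ hi =>
      (abs_rowSum_triangularSigns_add_rev hy hi).le

end UpperBound

/-- The maximum discrepancy of the X-shaped board equals `n`: every `±1`
assignment admits switch settings achieving discrepancy at least `n`, and some
assignment admits no switch setting with discrepancy exceeding `n`. -/
theorem stmt_6 (n : ℕ) :
    (∀ a : Fin n × Fin n → ℤ, (∀ p ∈ xBoard n, a p = 1 ∨ a p = -1) →
      ∃ x y : Fin n → ℤ, (∀ i, x i = 1 ∨ x i = -1) ∧ (∀ j, y j = 1 ∨ y j = -1) ∧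
        (n : ℤ) ≤ ∑ p ∈ xBoard n, a p * x p.1 * y p.2) ∧
    (∃ a : Fin n × Fin n → ℤ, (∀ p ∈ xBoard n, a p = 1 ∨ a p = -1) ∧
      ∀ x y : Fin n → ℤ, (∀ i, x i = 1 ∨ x i = -1) → (∀ j, y j = 1 ∨ y j = -1) →
        ∑ p ∈ xBoard n, a p * x p.1 * y p.2 ≤ (n : ℤ)) :=
  ⟨exists_natCast_le_sum_xBoard,
    triangularSigns n, fun p _ => by unfold triangularSigns; split_ifs <;> simp,
    fun _ _ hx hy => sum_xBoard_triangularSigns_le hx hy⟩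
end

section
/- Let H ⊆ {1,...,n}² be a board with area A = |H|, x-projection size u and y-projection size v, satisfying A ≥ c(u+v)² for some constant c > 0. Then there exists a ±1 assignment on H such that for all row/column switch settings, the discrepancy ∑_{(i,j)∈H} a_{ij} x_i y_j is at most c_1 · A^{3/4}, where c_1 = (2 ln 2)^{1/2} · c^{-1/4}. -/
/-!
A random `±1` assignment works; it is encoded by the set `T ⊆ H` of cells carrying `+1`.
For a fixed switch setting the discrepancy is a Rademacher sum of `A = |H|` terms, so by the
exponential moment bound `cosh t ≤ exp (t² / 2)` fewer than `2 ^ A * exp (-λ² / (2A))`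
assignments exceed `λ`. Switches matter only on the two projections of `H`, which leaves
`2 ^ (u + v)` settings, and density gives `λ² / (2A) ≥ (u + v) log 2` for the stated `λ`,
so the union bound does not cover all `2 ^ A` assignments.
-/

open scoped Classical

open Finset Real

section SignIndicator

variable {α R : Type*}

noncomputable def signIndicator [One R] [Neg R] (T : Finset α) (p : α) : R :=
  if p ∈ T then 1 else -1

lemma signIndicator_eq_one_or_neg_one [One R] [Neg R] (T : Finset α) (p : α) :
    (signIndicator T p : R) = 1 ∨ signIndicator T p = -1 := by
  unfold signIndicator; split_ifs <;> simp

variable [Ring R]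

@[simp, norm_cast]
lemma Int.cast_signIndicator (T : Finset α) (p : α) :
    ((signIndicator T p : ℤ) : R) = signIndicator T p := by
  unfold signIndicator; split_ifs <;> simp

lemma sq_signIndicator (T : Finset α) (p : α) : (signIndicator T p : R) ^ 2 = 1 := by
  unfold signIndicator; split_ifs <;> simp

lemma signIndicator_filter_eq_one {x : α → ℤ} (hx : ∀ i, x i = 1 ∨ x i = -1) {U : Finset α}
    {i : α} (hi : i ∈ U) : (signIndicator (U.filter (x · = 1)) i : R) = x i := by
  unfold signIndicator
  rcases hx i with h | h <;> simp [h, hi]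

end SignIndicator

section RademacherSum

variable {α : Type*} (s : Finset α) (w : α → ℝ)

lemma sum_powerset_exp_mul_sum_signIndicator (t : ℝ) :
    ∑ T ∈ s.powerset, exp (t * ∑ p ∈ s, w p * signIndicator T p)
      = ∏ p ∈ s, 2 * cosh (t * w p) := by
  have hcosh (p : α) : 2 * cosh (t * w p) = exp (t * w p) + exp (-(t * w p)) := by
    rw [cosh_eq]; ring
  simp_rw [hcosh, prod_add]
  refine sum_congr rfl fun T hT => ?_
  rw [mem_powerset] at hT
  rw [mul_sum, exp_sum, ← prod_sdiff hT, mul_comm]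
  congr 1 <;> refine prod_congr rfl fun p hp => ?_
  · simp [signIndicator, hp]
  · simp [signIndicator, (mem_sdiff.mp hp).2]

lemma card_filter_lt_sum_mul_exp_lt {t : ℝ} (ht : 0 < t) (lam : ℝ) :
    (#{T ∈ s.powerset | lam < ∑ p ∈ s, w p * signIndicator T p} : ℝ) * exp (t * lam)
      < ∏ p ∈ s, 2 * cosh (t * w p) := by
  rw [← sum_powerset_exp_mul_sum_signIndicator]
  set E := {T ∈ s.powerset | lam < ∑ p ∈ s, w p * signIndicator T p}
  rcases E.eq_empty_or_nonempty with hE | hE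
  · rw [hE, card_empty, Nat.cast_zero, zero_mul]
    exact sum_pos (fun _ _ => exp_pos _) (powerset_nonempty s)
  calc (#E : ℝ) * exp (t * lam) = ∑ _T ∈ E, exp (t * lam) := by
        rw [sum_const, nsmul_eq_mul]
    _ < ∑ T ∈ E, exp (t * ∑ p ∈ s, w p * signIndicator T p) :=
        sum_lt_sum_of_nonempty hE fun T hT =>
          exp_lt_exp.2 (mul_lt_mul_of_pos_left (mem_filter.1 hT).2 ht)
    _ ≤ ∑ T ∈ s.powerset, exp (t * ∑ p ∈ s, w p * signIndicator T p) :=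
        sum_le_sum_of_subset_of_nonneg (filter_subset _ _) fun _ _ _ => (exp_pos _).le

lemma card_filter_lt_sum_lt_two_pow_mul_exp (hw : ∀ p ∈ s, w p ^ 2 = 1) (hs : s.Nonempty)
    {lam : ℝ} (hlam : 0 < lam) :
    (#{T ∈ s.powerset | lam < ∑ p ∈ s, w p * signIndicator T p} : ℝ)
      < 2 ^ #s * exp (-(lam ^ 2 / (2 * #s))) := by
  have hA : (0 : ℝ) < #s := by exact_mod_cast hs.card_pos
  set t := lam / #s with ht
  have hcosh : ∏ p ∈ s, 2 * cosh (t * w p) ≤ 2 ^ #s * exp (#s * (t ^ 2 / 2)) := by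
    calc ∏ p ∈ s, 2 * cosh (t * w p) ≤ ∏ _p ∈ s, 2 * exp (t ^ 2 / 2) := by
          refine prod_le_prod (fun _ _ => by positivity) fun p hp => ?_
          have := cosh_le_exp_half_sq (t * w p)
          rw [mul_pow, hw p hp, mul_one] at this
          gcongr
      _ = 2 ^ #s * exp (#s * (t ^ 2 / 2)) := by rw [prod_const, mul_pow, exp_nat_mul]
  -- `t = lam / #s` minimises the exponent `#s * t ^ 2 / 2 - t * lam`.
  have hexp : 2 ^ #s * exp (#s * (t ^ 2 / 2))
      = 2 ^ #s * exp (-(lam ^ 2 / (2 * #s))) * exp (t * lam) := by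
    rw [mul_assoc, ← exp_add]
    congr 2
    rw [ht]
    field_simp
    ring
  refine lt_of_mul_lt_mul_right ?_ (exp_pos (t * lam)).le
  exact (card_filter_lt_sum_mul_exp_lt s w (div_pos hlam hA) lam).trans_le (hexp ▸ hcosh)

end RademacherSum

lemma Finset.exists_forall_notMem_of_sum_card_lt {Ω ι : Type*} {S : Finset Ω} {I : Finset ι}
    {E : ι → Finset Ω} (h : ∑ i ∈ I, #(E i) < #S) : ∃ ω ∈ S, ∀ i ∈ I, ω ∉ E i := by
  obtain ⟨ω, hω, hbad⟩ := exists_mem_notMem_of_card_lt_card (card_biUnion_le.trans_lt h)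
  exact ⟨ω, hω, fun i hi hωi => hbad (mem_biUnion.2 ⟨i, hi, hωi⟩)⟩

lemma exists_subset_forall_sum_signIndicator_le {α β : Type*} [DecidableEq α] [DecidableEq β]
    (H : Finset (α × β))
    (hH : H.Nonempty) {lam : ℝ} (hlam : 0 < lam)
    (hunion : (2 : ℝ) ^ (#(H.image Prod.fst) + #(H.image Prod.snd))
      * exp (-(lam ^ 2 / (2 * #H))) ≤ 1) :
    ∃ T ⊆ H, ∀ P ⊆ H.image Prod.fst, ∀ Q ⊆ H.image Prod.snd,
      ∑ p ∈ H, signIndicator P p.1 * signIndicator Q p.2 * signIndicator T p ≤ lam := by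
  set U := H.image Prod.fst
  set V := H.image Prod.snd
  let w (PQ : Finset α × Finset β) (p : α × β) : ℝ :=
    signIndicator PQ.1 p.1 * signIndicator PQ.2 p.2
  have hw (PQ) : ∀ p ∈ H, w PQ p ^ 2 = 1 := fun p _ => by
    simp only [w, mul_pow, sq_signIndicator, mul_one]
  have hcount : ∑ PQ ∈ U.powerset ×ˢ V.powerset,
      #{T ∈ H.powerset | lam < ∑ p ∈ H, w PQ p * signIndicator T p} < #H.powerset := by
    suffices (∑ PQ ∈ U.powerset ×ˢ V.powerset,
        #{T ∈ H.powerset | lam < ∑ p ∈ H, w PQ p * signIndicator T p} : ℝ) < 2 ^ #H by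
      rw [card_powerset]; exact_mod_cast this
    calc _ < ∑ _PQ ∈ U.powerset ×ˢ V.powerset, (2 : ℝ) ^ #H * exp (-(lam ^ 2 / (2 * #H))) :=
          sum_lt_sum_of_nonempty ((powerset_nonempty U).product (powerset_nonempty V))
            fun PQ _ => card_filter_lt_sum_lt_two_pow_mul_exp H (w PQ) (hw PQ) hH hlam
      _ = 2 ^ (#U + #V) * exp (-(lam ^ 2 / (2 * #H))) * 2 ^ #H := by
          rw [sum_const, card_product, card_powerset, card_powerset, nsmul_eq_mul]
          push_cast
          ring
      _ ≤ 2 ^ #H := mul_le_of_le_one_left (by positivity) hunion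
  obtain ⟨T, hT, hgood⟩ := exists_forall_notMem_of_sum_card_lt hcount
  refine ⟨T, mem_powerset.1 hT, fun P hP Q hQ => not_lt.1 fun hbad => ?_⟩
  exact hgood (P, Q) (mem_product.2 ⟨mem_powerset.2 hP, mem_powerset.2 hQ⟩)
    (mem_filter.2 ⟨hT, hbad⟩)

lemma mul_log_two_le_sq_div {c A m : ℝ} (hc : 0 < c) (hA : 0 < A) (hm : 0 ≤ m)
    (h : c * m ^ 2 ≤ A) :
    m * log 2 ≤ (√(2 * log 2) * c ^ (-(1 : ℝ)/4) * A ^ ((3 : ℝ)/4)) ^ 2 / (2 * A) := by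
  have hsq : (√(2 * log 2) * c ^ (-(1 : ℝ)/4) * A ^ ((3 : ℝ)/4)) ^ 2 / (2 * A)
      = log 2 * √(A / c) := by
    have hc2 : (c ^ (-(1 : ℝ)/4)) ^ 2 = (c ^ (1/2 : ℝ))⁻¹ := by
      rw [← rpow_natCast, ← rpow_mul hc.le, ← rpow_neg hc.le]; norm_num
    have hA2 : (A ^ ((3 : ℝ)/4)) ^ 2 = A ^ (1/2 : ℝ) * A := by
      rw [← rpow_natCast, ← rpow_mul hA.le, ← rpow_add_one hA.ne']; norm_num
    rw [mul_pow, mul_pow, sq_sqrt (by positivity), hc2, hA2, sqrt_eq_rpow, div_rpow hA.le hc.le]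
    field_simp
  have hm' : m ≤ √(A / c) := (le_sqrt hm (by positivity)).2 (by rw [le_div_iff₀ hc]; linarith)
  rw [hsq, mul_comm]
  gcongr

theorem stmt_8_general (H : Finset (ℕ × ℕ))
    (c : ℝ) (hc : 0 < c)
    (hdense : c * ((H.image Prod.fst).card + (H.image Prod.snd).card : ℝ) ^ 2
        ≤ (H.card : ℝ)) :
    ∃ a : ℕ × ℕ → ℤ, (∀ p ∈ H, a p = 1 ∨ a p = -1) ∧
      ∀ x y : ℕ → ℤ, (∀ i, x i = 1 ∨ x i = -1) → (∀ j, y j = 1 ∨ y j = -1) →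
        ((∑ p ∈ H, a p * x p.1 * y p.2 : ℤ) : ℝ)
          ≤ Real.sqrt (2 * Real.log 2) * c ^ (-(1 : ℝ)/4)
              * (H.card : ℝ) ^ ((3 : ℝ)/4) := by
  rcases H.eq_empty_or_nonempty with rfl | hH
  · exact ⟨fun _ => 1, by simp, fun x y _ _ => by simp⟩
  set lam := √(2 * log 2) * c ^ (-(1 : ℝ)/4) * (#H : ℝ) ^ ((3 : ℝ)/4)
  have hunion : (2 : ℝ) ^ (#(H.image Prod.fst) + #(H.image Prod.snd))
      * exp (-(lam ^ 2 / (2 * #H))) ≤ 1 := by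
    have : (#(H.image Prod.fst) + #(H.image Prod.snd) : ℝ) * log 2 ≤ lam ^ 2 / (2 * #H) :=
      mul_log_two_le_sq_div hc (by exact_mod_cast hH.card_pos) (by positivity) hdense
    rw [← rpow_natCast, rpow_def_of_pos two_pos, ← exp_add, exp_le_one_iff]
    push_cast
    linarith
  obtain ⟨T, -, hT⟩ := exists_subset_forall_sum_signIndicator_le H hH (by positivity) hunion
  refine ⟨signIndicator T, fun p _ => signIndicator_eq_one_or_neg_one T p, fun x y hx hy => ?_⟩
  refine le_of_eq_of_le ?_ (hT _ (filter_subset (x · = 1) _) _ (filter_subset (y · = 1) _))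
  push_cast
  refine sum_congr rfl fun p hp => ?_
  rw [signIndicator_filter_eq_one hx (mem_image_of_mem Prod.fst hp),
    signIndicator_filter_eq_one hy (mem_image_of_mem Prod.snd hp)]
  ring

/-- Dense board upper bound: if `H ⊆ {1,…,n}²` has area `A = |H| ≥ c(u+v)²`,
where `u, v` are the projection sizes, then some `±1` assignment on `H` keeps
the discrepancy at most `(2 ln 2)^(1/2) c^(-1/4) · A^(3/4)` for all switch
settings. -/
theorem stmt_8 (n : ℕ) (H : Finset (ℕ × ℕ))
    (hH : H ⊆ Finset.Icc 1 n ×ˢ Finset.Icc 1 n)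
    (c : ℝ) (hc : 0 < c)
    (hdense : c * ((H.image Prod.fst).card + (H.image Prod.snd).card : ℝ) ^ 2
        ≤ (H.card : ℝ)) :
    ∃ a : ℕ × ℕ → ℤ, (∀ p ∈ H, a p = 1 ∨ a p = -1) ∧
      ∀ x y : ℕ → ℤ, (∀ i, x i = 1 ∨ x i = -1) → (∀ j, y j = 1 ∨ y j = -1) →
        ((∑ p ∈ H, a p * x p.1 * y p.2 : ℤ) : ℝ)
          ≤ Real.sqrt (2 * Real.log 2) * c ^ (-(1 : ℝ)/4)
              * (H.card : ℝ) ^ ((3 : ℝ)/4) :=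
  stmt_8_general H c hc hdense
end

section
/- Let H ⊆ {1,...,n}² be a dense board with |H| = A ≥ c(u+v)², where u ≥ v are the sizes of the projections. Then for every ±1 assignment on H there exist switch settings with discrepancy at least c_2 · A^{3/4} for some constant c_2 > 0 depending only on c. -/
/-!
Fix a column switch setting `s ⊆ V`, i.e. `χ_s(j) = 1` for `j ∈ s` and `-1` otherwise, and let
`R_i(s) = ∑_j M i j χ_s(j)` be the switched sum of row `i`.
For `s` uniformly random, `E R_i² = ∑_j M i j ²` and `E R_i⁴ ≤ 3 (E R_i²)²`, so Hölder's inequality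
`(E X²)³ ≤ (E|X|)² E X⁴` gives Khintchine's bound `E|R_i| ≥ (E R_i²)^{1/2} / √3`. Hence some `s`
has `∑_i |R_i(s)| ≥ ∑_i √(d_i) / √3`, where `d_i` is the number of cells of row `i`, and switching
each row by the sign of `R_i(s)` realises this as a discrepancy. Finally `√(d_i) ≥ d_i / √v` and
`c v² ≤ A` give `∑_i √(d_i) ≥ A / √v ≥ c^{1/4} A^{3/4}`.
-/

open Finset

theorem sum_sq_pow_three_le_sq_sum_abs_mul_sum_pow_four {ι : Type*} (s : Finset ι) (X : ι → ℝ) :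
    (∑ i ∈ s, X i ^ 2) ^ 3 ≤ (∑ i ∈ s, |X i|) ^ 2 * ∑ i ∈ s, X i ^ 4 := by
  set Q := ∑ i ∈ s, X i ^ 2
  set M₁ := ∑ i ∈ s, |X i|
  set M₃ := ∑ i ∈ s, |X i| ^ 3
  set M₄ := ∑ i ∈ s, X i ^ 4
  have h13 : Q ^ 2 ≤ M₁ * M₃ :=
    sum_sq_le_sum_mul_sum_of_sq_le_mul s (fun i _ => abs_nonneg _) (fun i _ => by positivity)
      fun i _ => le_of_eq (by rw [← sq_abs (X i)]; ring)
  have h24 : M₃ ^ 2 ≤ Q * M₄ :=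
    sum_sq_le_sum_mul_sum_of_sq_le_mul s (r := fun i => |X i| ^ 3) (f := fun i => X i ^ 2)
      (g := fun i => X i ^ 4) (fun i _ => by positivity) (fun i _ => by positivity)
      fun i _ => le_of_eq (by rw [show X i ^ 4 = (X i ^ 2) ^ 2 by ring, ← sq_abs (X i)]; ring)
  rcases (sum_nonneg fun i _ => sq_nonneg (X i) : 0 ≤ Q).eq_or_lt with hQ | hQ
  · rw [show Q = 0 from hQ.symm, zero_pow three_ne_zero]
    positivity
  refine le_of_mul_le_mul_left ?_ hQ
  calc Q * Q ^ 3 = (Q ^ 2) ^ 2 := by ring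
    _ ≤ (M₁ * M₃) ^ 2 := pow_le_pow_left₀ (sq_nonneg Q) h13 2
    _ = M₁ ^ 2 * M₃ ^ 2 := mul_pow _ _ _
    _ ≤ M₁ ^ 2 * (Q * M₄) := by gcongr
    _ = Q * (M₁ ^ 2 * M₄) := by ring

section Switching

variable {ι κ : Type*} [DecidableEq κ]

def switchSign (s : Finset κ) (j : κ) : ℤ := if j ∈ s then 1 else -1

def switchedSum (b : κ → ℝ) (t s : Finset κ) : ℝ := ∑ j ∈ t, b j * switchSign s j

lemma switchSign_eq_one_or (s : Finset κ) (j : κ) : switchSign s j = 1 ∨ switchSign s j = -1 := by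
  unfold switchSign
  split_ifs <;> simp

lemma sum_powerset_insert_switchedSum {b : κ → ℝ} {t : Finset κ} {j : κ} (hj : j ∉ t)
    (F : ℝ → ℝ) :
    ∑ s ∈ (insert j t).powerset, F (switchedSum b (insert j t) s) =
      ∑ s ∈ t.powerset, (F (switchedSum b t s - b j) + F (switchedSum b t s + b j)) := by
  rw [sum_powerset_insert hj, ← sum_add_distrib]
  refine sum_congr rfl fun s hs => ?_
  have hjs : j ∉ s := fun h => hj (mem_powerset.mp hs h)
  have hrest : switchedSum b t (insert j s) = switchedSum b t s :=
    sum_congr rfl fun i hi => by simp [switchSign, ne_of_mem_of_not_mem hi hj]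
  rw [switchedSum, sum_insert hj, switchedSum, sum_insert hj, ← switchedSum, ← switchedSum,
    hrest, switchSign, switchSign, if_neg hjs, if_pos (mem_insert_self j s)]
  push_cast
  congr 2 <;> ring

theorem sum_powerset_switchedSum_sq (b : κ → ℝ) (t : Finset κ) :
    ∑ s ∈ t.powerset, switchedSum b t s ^ 2 = 2 ^ t.card * ∑ j ∈ t, b j ^ 2 := by
  induction t using Finset.induction_on with
  | empty => simp [switchedSum]
  | insert j t hj ih =>
    have hpair (r : ℝ) : (r - b j) ^ 2 + (r + b j) ^ 2 = 2 * r ^ 2 + 2 * b j ^ 2 := by ring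
    rw [sum_powerset_insert_switchedSum hj (· ^ 2)]
    simp only [hpair, sum_add_distrib, ← mul_sum, ih, sum_const, card_powerset, nsmul_eq_mul,
      sum_insert hj, card_insert_of_notMem hj]
    push_cast
    ring

theorem sum_powerset_switchedSum_pow_four_le (b : κ → ℝ) (t : Finset κ) :
    ∑ s ∈ t.powerset, switchedSum b t s ^ 4 ≤ 3 * 2 ^ t.card * (∑ j ∈ t, b j ^ 2) ^ 2 := by
  induction t using Finset.induction_on with
  | empty => simp [switchedSum]
  | insert j t hj ih =>
    have hpair (r : ℝ) :
        (r - b j) ^ 4 + (r + b j) ^ 4 = 2 * r ^ 4 + 12 * b j ^ 2 * r ^ 2 + 2 * b j ^ 4 := by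
      ring
    rw [sum_powerset_insert_switchedSum hj (· ^ 4)]
    simp only [hpair, sum_add_distrib, ← mul_sum, sum_powerset_switchedSum_sq, sum_const,
      card_powerset, nsmul_eq_mul, sum_insert hj, card_insert_of_notMem hj]
    push_cast
    have h2 : (0 : ℝ) ≤ 2 ^ t.card * b j ^ 4 := by positivity
    rw [pow_succ (2 : ℝ) t.card]
    linarith

theorem sqrt_sum_sq_le_sum_powerset_abs_switchedSum (b : κ → ℝ) (t : Finset κ) :
    2 ^ t.card * √(∑ j ∈ t, b j ^ 2) ≤ √3 * ∑ s ∈ t.powerset, |switchedSum b t s| := by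
  set N : ℝ := 2 ^ t.card
  set Q := ∑ j ∈ t, b j ^ 2
  set M₁ := ∑ s ∈ t.powerset, |switchedSum b t s|
  have hmoments : (N * Q) ^ 3 ≤ M₁ ^ 2 * (3 * N * Q ^ 2) := by
    have h := sum_sq_pow_three_le_sq_sum_abs_mul_sum_pow_four t.powerset (switchedSum b t)
    rw [sum_powerset_switchedSum_sq] at h
    exact h.trans (by gcongr; exact sum_powerset_switchedSum_pow_four_le b t)
  have hsq : N ^ 2 * Q ≤ 3 * M₁ ^ 2 := by
    rcases (sum_nonneg fun j _ => sq_nonneg (b j) : 0 ≤ Q).eq_or_lt with hQ | hQ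
    · rw [show Q = 0 from hQ.symm, mul_zero]
      positivity
    refine le_of_mul_le_mul_right ?_ (by positivity : 0 < N * Q ^ 2)
    linarith
  calc N * √Q = √(N ^ 2 * Q) := by rw [Real.sqrt_mul (by positivity), Real.sqrt_sq (by positivity)]
    _ ≤ √(3 * M₁ ^ 2) := Real.sqrt_le_sqrt hsq
    _ = √3 * M₁ := by rw [Real.sqrt_mul (by norm_num), Real.sqrt_sq (by positivity)]

theorem exists_switch_sum_sqrt_le_sum_abs_switchedSum (U : Finset ι) (V : Finset κ)
    (M : ι → κ → ℝ) :
    ∃ s : Finset κ, ∑ i ∈ U, √(∑ j ∈ V, M i j ^ 2) ≤ √3 * ∑ i ∈ U, |switchedSum (M i) V s| := by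
  have hmean : ∑ _s ∈ V.powerset, ∑ i ∈ U, √(∑ j ∈ V, M i j ^ 2) ≤
      ∑ s ∈ V.powerset, √3 * ∑ i ∈ U, |switchedSum (M i) V s| := by
    calc ∑ _s ∈ V.powerset, ∑ i ∈ U, √(∑ j ∈ V, M i j ^ 2)
        = ∑ i ∈ U, 2 ^ V.card * √(∑ j ∈ V, M i j ^ 2) := by
          rw [sum_const, card_powerset, nsmul_eq_mul, mul_sum]
          push_cast
          rfl
      _ ≤ ∑ i ∈ U, √3 * ∑ s ∈ V.powerset, |switchedSum (M i) V s| :=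
          sum_le_sum fun i _ => sqrt_sum_sq_le_sum_powerset_abs_switchedSum (M i) V
      _ = _ := by rw [← mul_sum, sum_comm, mul_sum]
  obtain ⟨s, -, hs⟩ := exists_le_of_sum_le (powerset_nonempty V) hmean
  exact ⟨s, hs⟩

theorem exists_signs_sum_sqrt_le_sum_mul (U : Finset ι) (V : Finset κ) (M : ι → κ → ℝ) :
    ∃ x : ι → ℤ, ∃ y : κ → ℤ, (∀ i, x i = 1 ∨ x i = -1) ∧ (∀ j, y j = 1 ∨ y j = -1) ∧
      ∑ i ∈ U, √(∑ j ∈ V, M i j ^ 2) ≤ √3 * ∑ i ∈ U, ∑ j ∈ V, M i j * x i * y j := by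
  obtain ⟨s, hs⟩ := exists_switch_sum_sqrt_le_sum_abs_switchedSum U V M
  refine ⟨fun i => if 0 ≤ switchedSum (M i) V s then 1 else -1, switchSign s,
    fun i => by dsimp only; split_ifs <;> simp, switchSign_eq_one_or s, hs.trans_eq ?_⟩
  congr 1
  refine sum_congr rfl fun i _ => ?_
  simp only [mul_right_comm _ _ (switchSign s _ : ℝ), ← sum_mul]
  split_ifs with h
  · rw [abs_of_nonneg h, switchedSum]
    simp
  · rw [abs_of_neg (not_le.mp h), switchedSum]
    simp

end Switching

theorem sum_sq_div_sqrt_card_le_sqrt_sum_sq {κ : Type*} (V : Finset κ) (m : κ → ℝ)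
    (hm : ∀ j ∈ V, |m j| ≤ 1) :
    (∑ j ∈ V, m j ^ 2) / √V.card ≤ √(∑ j ∈ V, m j ^ 2) := by
  have hQ : ∑ j ∈ V, m j ^ 2 ≤ V.card := by
    simpa using sum_le_sum fun j hj => (sq_le_one_iff_abs_le_one (m j)).mpr (hm j hj)
  refine div_le_of_le_mul₀ (Real.sqrt_nonneg _) (Real.sqrt_nonneg _) ?_
  calc ∑ j ∈ V, m j ^ 2 = √(∑ j ∈ V, m j ^ 2) * √(∑ j ∈ V, m j ^ 2) :=
        (Real.mul_self_sqrt (sum_nonneg fun j _ => sq_nonneg _)).symm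
    _ ≤ √(∑ j ∈ V, m j ^ 2) * √V.card := by gcongr

theorem rpow_one_fourth_mul_rpow_three_fourths_le_div_sqrt {c A v : ℝ} (hc : 0 < c)
    (hA : 0 ≤ A) (hv : 0 < v) (hcv : c * v ^ 2 ≤ A) :
    c ^ (1 / 4 : ℝ) * A ^ (3 / 4 : ℝ) ≤ A / √v := by
  rw [le_div_iff₀ (Real.sqrt_pos.mpr hv), ← pow_le_pow_iff_left₀ (by positivity) hA four_ne_zero]
  have hfourth {x : ℝ} (hx : 0 ≤ x) (e : ℝ) : (x ^ e) ^ 4 = x ^ (4 * e) := by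
    rw [← Real.rpow_natCast, ← Real.rpow_mul hx, mul_comm]
    norm_num
  calc (c ^ (1 / 4 : ℝ) * A ^ (3 / 4 : ℝ) * √v) ^ 4
      = c * A ^ 3 * (√v ^ 2) ^ 2 := by
        rw [mul_pow, mul_pow, hfourth hc.le, hfourth hA, show (4 : ℝ) * (1 / 4) = 1 by norm_num,
          show (4 : ℝ) * (3 / 4) = (3 : ℕ) by norm_num, Real.rpow_one, Real.rpow_natCast]
        ring
    _ = A ^ 3 * (c * v ^ 2) := by
        rw [Real.sq_sqrt hv.le]
        ring
    _ ≤ A ^ 3 * A := by gcongr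
    _ = A ^ 4 := by ring

section Board

variable {α β : Type*} [DecidableEq α] [DecidableEq β]

def boardMatrix (H : Finset (α × β)) (a : α × β → ℤ) (i : α) (j : β) : ℝ :=
  if (i, j) ∈ H then a (i, j) else 0

lemma sum_image_fst_sum_image_snd_ite_mem {M : Type*} [AddCommMonoid M] (H : Finset (α × β))
    (f : α × β → M) :
    ∑ i ∈ H.image Prod.fst, ∑ j ∈ H.image Prod.snd, (if (i, j) ∈ H then f (i, j) else 0) =
      ∑ p ∈ H, f p := by
  rw [← sum_product' (f := fun i j => if (i, j) ∈ H then f (i, j) else 0), sum_ite_mem,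
    inter_eq_right.mpr subset_product]

lemma cast_sum_mul_mul_eq_sum_sum_boardMatrix (H : Finset (α × β)) (a : α × β → ℤ)
    (x : α → ℤ) (y : β → ℤ) :
    ((∑ p ∈ H, a p * x p.1 * y p.2 : ℤ) : ℝ) =
      ∑ i ∈ H.image Prod.fst, ∑ j ∈ H.image Prod.snd, boardMatrix H a i j * x i * y j := by
  push_cast
  rw [← sum_image_fst_sum_image_snd_ite_mem]
  simp only [boardMatrix, ite_mul, zero_mul]

variable {H : Finset (α × β)} {a : α × β → ℤ}

lemma abs_boardMatrix_le_one (ha : ∀ p ∈ H, a p = 1 ∨ a p = -1) (i : α) (j : β) :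
    |boardMatrix H a i j| ≤ 1 := by
  unfold boardMatrix
  split_ifs with h
  · rcases ha _ h with e | e <;> simp [e]
  · simp

lemma sum_sum_boardMatrix_sq (ha : ∀ p ∈ H, a p = 1 ∨ a p = -1) :
    ∑ i ∈ H.image Prod.fst, ∑ j ∈ H.image Prod.snd, boardMatrix H a i j ^ 2 = H.card := by
  rw [card_eq_sum_ones, Nat.cast_sum, ← sum_image_fst_sum_image_snd_ite_mem]
  refine sum_congr rfl fun i _ => sum_congr rfl fun j _ => ?_
  unfold boardMatrix
  split_ifs with h
  · rcases ha _ h with e | e <;> simp [e]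
  · simp

end Board

/-- Dense board lower bound: for every `c > 0` there is `c₂ > 0` such that for
every dense board `H ⊆ {1,…,n}²` with `|H| = A ≥ c(u+v)²` and `u ≥ v`, every
`±1` assignment on `H` admits switch settings with discrepancy at least
`c₂ · A^(3/4)`. -/
theorem stmt_9 (c : ℝ) (hc : 0 < c) :
    ∃ c₂ : ℝ, 0 < c₂ ∧
      ∀ (n : ℕ) (H : Finset (ℕ × ℕ)),
        H ⊆ Finset.Icc 1 n ×ˢ Finset.Icc 1 n →
        (H.image Prod.snd).card ≤ (H.image Prod.fst).card →
        c * ((H.image Prod.fst).card + (H.image Prod.snd).card : ℝ) ^ 2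
            ≤ (H.card : ℝ) →
        ∀ a : ℕ × ℕ → ℤ, (∀ p ∈ H, a p = 1 ∨ a p = -1) →
          ∃ x y : ℕ → ℤ, (∀ i, x i = 1 ∨ x i = -1) ∧ (∀ j, y j = 1 ∨ y j = -1) ∧
            c₂ * (H.card : ℝ) ^ ((3 : ℝ)/4)
              ≤ ((∑ p ∈ H, a p * x p.1 * y p.2 : ℤ) : ℝ) := by
  refine ⟨c ^ (1 / 4 : ℝ) / √3, by positivity, fun n H _ _ hdense a ha => ?_⟩
  rcases H.eq_empty_or_nonempty with rfl | hH
  · exact ⟨fun _ => 1, fun _ => 1, fun _ => Or.inl rfl, fun _ => Or.inl rfl, by simp⟩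
  obtain ⟨x, y, hx, hy, hxy⟩ :=
    exists_signs_sum_sqrt_le_sum_mul (H.image Prod.fst) (H.image Prod.snd) (boardMatrix H a)
  refine ⟨x, y, hx, hy, ?_⟩
  have hrows : (H.card : ℝ) / √(H.image Prod.snd).card ≤
      ∑ i ∈ H.image Prod.fst, √(∑ j ∈ H.image Prod.snd, boardMatrix H a i j ^ 2) := by
    rw [← sum_sum_boardMatrix_sq ha, sum_div]
    exact sum_le_sum fun i _ => sum_sq_div_sqrt_card_le_sqrt_sum_sq _ _
      fun j _ => abs_boardMatrix_le_one ha i j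
  have hcols : c * ((H.image Prod.snd).card : ℝ) ^ 2 ≤ H.card :=
    le_trans (by gcongr; exact le_add_of_nonneg_left (Nat.cast_nonneg _)) hdense
  rw [cast_sum_mul_mul_eq_sum_sum_boardMatrix, div_mul_eq_mul_div, div_le_iff₀ (by positivity),
    mul_comm _ √3]
  calc c ^ (1 / 4 : ℝ) * (H.card : ℝ) ^ (3 / 4 : ℝ)
      ≤ H.card / √(H.image Prod.snd).card :=
        rpow_one_fourth_mul_rpow_three_fourths_le_div_sqrt hc (Nat.cast_nonneg _)
          (by simpa using hH) hcols
    _ ≤ _ := hrows.trans hxy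
end

section
/- Fix a constant 0 < δ < 1 and consider the n×n board where only the first (1−δ)n row switches and first (1−δ)n column switches are available. Then there exists a ±1 matrix A and a constant c(δ) > 0 such that for all available switch settings and all sufficiently large n, ∑_{i,j} a_{ij} x_i y_j ≤ −c(δ)·n². -/
open Finset

/-- Sign character on a pair of booleans. -/
def chi (a b : Bool) : ℤ := if a && b then -1 else 1

/-- Sylvester–Hadamard matrix entry indexed by boolean vectors. -/
def Had {k : ℕ} (a b : Fin k → Bool) : ℤ := ∏ i, chi (a i) (b i)

lemma chi_comm (a b : Bool) : chi a b = chi b a := by cases a <;> cases b <;> rfl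

lemma Had_comm {k : ℕ} (a b : Fin k → Bool) : Had a b = Had b a := by
  unfold Had; exact Finset.prod_congr rfl fun i _ => chi_comm _ _

lemma Had_pm {k : ℕ} (a b : Fin k → Bool) : Had a b = 1 ∨ Had a b = -1 := by
  unfold Had
  refine Finset.prod_induction _ (fun z => z = 1 ∨ z = -1) ?_ (Or.inl rfl) ?_
  · rintro x y (rfl|rfl) (rfl|rfl) <;> simp
  · intro i _; unfold chi; split <;> simp

lemma chi_orth (x b b' : Bool) :
    chi x b * chi x b' = if b = b' then (chi x b)^2 else chi x b * chi x b' := by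
  split <;> [skip; rfl]
  · next h => subst h; ring

lemma orth {k : ℕ} (b b' : Fin k → Bool) :
    ∑ a : Fin k → Bool, Had a b * Had a b' = if b = b' then 2^k else 0 := by
  have h1 : ∀ a : Fin k → Bool, Had a b * Had a b' = ∏ i, (chi (a i) (b i) * chi (a i) (b' i)) := by
    intro a; unfold Had; rw [← Finset.prod_mul_distrib]
  simp_rw [h1]
  rw [← Fintype.prod_sum (fun i x => chi x (b i) * chi x (b' i))]
  have h2 : ∀ i : Fin k, (∑ x : Bool, chi x (b i) * chi x (b' i))
      = if b i = b' i then 2 else 0 := by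
    intro i; cases hb : b i <;> cases hb' : b' i <;> simp [chi]
  rw [Finset.prod_congr rfl fun i _ => h2 i]
  by_cases h : b = b'
  · subst h; simp
  · rw [if_neg h]
    obtain ⟨i, hi⟩ : ∃ i, b i ≠ b' i := by
      by_contra hc; push_neg at hc; exact h (funext hc)
    exact Finset.prod_eq_zero (Finset.mem_univ i) (by simp [hi])

/-- Lindsey-type bound over the full boolean cube. -/
lemma lindsey {k : ℕ} (u v : (Fin k → Bool) → ℤ) :
    (∑ a : Fin k → Bool, ∑ b : Fin k → Bool, Had a b * u a * v b)^2
      ≤ 2^k * (∑ a, u a ^ 2) * (∑ b, v b ^ 2) := by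
  set w : (Fin k → Bool) → ℤ := fun b => ∑ a, Had a b * u a with hw
  have hS : (∑ a : Fin k → Bool, ∑ b : Fin k → Bool, Had a b * u a * v b)
      = ∑ b, w b * v b := by
    rw [Finset.sum_comm]
    exact Finset.sum_congr rfl fun b _ => by rw [hw]; simp [Finset.sum_mul]
  have hw2 : (∑ b, w b ^ 2) = 2^k * ∑ a, u a ^ 2 := by
    have : ∀ b, w b ^ 2 = ∑ a, ∑ a', (Had a b * Had a' b) * (u a * u a') := by
      intro b
      rw [hw, sq, Finset.sum_mul_sum]
      exact Finset.sum_congr rfl fun a _ => Finset.sum_congr rfl fun a' _ => by ring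
    simp_rw [this]
    rw [Finset.sum_comm]
    have : ∀ a : Fin k → Bool, (∑ b, ∑ a', (Had a b * Had a' b) * (u a * u a'))
        = 2^k * u a ^ 2 := by
      intro a
      rw [Finset.sum_comm]
      have h1 : ∀ a' : Fin k → Bool, (∑ b, (Had a b * Had a' b) * (u a * u a'))
          = (if a = a' then (2:ℤ)^k else 0) * (u a * u a') := by
        intro a'
        rw [← Finset.sum_mul]
        congr 1
        calc (∑ b, Had a b * Had a' b) = ∑ b, Had b a * Had b a' := by
              exact Finset.sum_congr rfl fun b _ => by rw [Had_comm a b, Had_comm a' b]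
          _ = _ := orth a a'
      rw [Finset.sum_congr rfl fun a' _ => h1 a']
      simp [ite_mul, sq]
    rw [Finset.sum_congr rfl fun a _ => this a, ← Finset.mul_sum]
  calc (∑ a : Fin k → Bool, ∑ b : Fin k → Bool, Had a b * u a * v b)^2
      = (∑ b, w b * v b)^2 := by rw [hS]
    _ ≤ (∑ b, w b ^ 2) * (∑ b, v b ^ 2) := Finset.sum_mul_sq_le_sq_mul_sq _ _ _
    _ = 2^k * (∑ a, u a ^ 2) * (∑ b, v b ^ 2) := by rw [hw2, mul_assoc]

/-- Binary encoding of an index. -/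
def enc (k : ℕ) {n : ℕ} (i : Fin n) : Fin k → Bool := fun m => (i : ℕ).testBit m

lemma enc_inj {k n : ℕ} (hk : n ≤ 2 ^ k) : Function.Injective (enc k (n := n)) := by
  intro i j h
  have : (i : ℕ) = (j : ℕ) := by
    refine Nat.eq_of_testBit_eq fun m => ?_
    by_cases hm : m < k
    · exact congrFun h ⟨m, hm⟩
    · have hi : (i : ℕ) < 2 ^ m :=
        lt_of_lt_of_le (lt_of_lt_of_le i.isLt hk) (Nat.pow_le_pow_right (by norm_num) (le_of_not_gt hm))
      have hj : (j : ℕ) < 2 ^ m :=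
        lt_of_lt_of_le (lt_of_lt_of_le j.isLt hk) (Nat.pow_le_pow_right (by norm_num) (le_of_not_gt hm))
      rw [Nat.testBit_eq_false_of_lt hi, Nat.testBit_eq_false_of_lt hj]
  exact Fin.ext this

lemma sum_swap3 {M : Type*} [AddCommMonoid M] {α β γ : Type*}
    [Fintype α] [Fintype β] [Fintype γ] (F : α → β → γ → M) :
    ∑ a : α, ∑ b : β, ∑ j : γ, F a b j = ∑ j : γ, ∑ a : α, ∑ b : β, F a b j := by
  rw [show (∑ a : α, ∑ b : β, ∑ j : γ, F a b j) = ∑ a : α, ∑ j : γ, ∑ b : β, F a b j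
    from Finset.sum_congr rfl fun a _ => Finset.sum_comm]
  exact Finset.sum_comm

lemma sum_swap4 {M : Type*} [AddCommMonoid M] {α β γ δ : Type*}
    [Fintype α] [Fintype β] [Fintype γ] [Fintype δ] (F : α → β → γ → δ → M) :
    ∑ a : α, ∑ b : β, ∑ i : γ, ∑ j : δ, F a b i j
      = ∑ i : γ, ∑ j : δ, ∑ a : α, ∑ b : β, F a b i j := by
  rw [sum_swap3 (fun a b i => ∑ j : δ, F a b i j)]
  refine Finset.sum_congr rfl fun i _ => ?_
  rw [sum_swap3 (fun a b j => F a b i j)]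

lemma lindsey_fin {n k : ℕ} (hk : n ≤ 2 ^ k) (x y : Fin n → ℤ) :
    (∑ i : Fin n, ∑ j : Fin n, Had (enc k i) (enc k j) * x i * y j) ^ 2
      ≤ 2 ^ k * (∑ i, x i ^ 2) * (∑ j, y j ^ 2) := by
  set u : (Fin k → Bool) → ℤ := fun c => ∑ i, if enc k i = c then x i else 0 with hu
  set v : (Fin k → Bool) → ℤ := fun c => ∑ j, if enc k j = c then y j else 0 with hv
  have key : (∑ a : Fin k → Bool, ∑ b, Had a b * u a * v b)
      = ∑ i : Fin n, ∑ j : Fin n, Had (enc k i) (enc k j) * x i * y j := by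
    have h1 : ∀ a b, Had a b * u a * v b
        = ∑ j : Fin n, ∑ i : Fin n,
            (if enc k j = b then y j else 0) * (if enc k i = a then x i else 0) * Had a b := by
      intro a b
      calc Had a b * u a * v b = (v b * u a) * Had a b := by ring
        _ = (∑ j : Fin n, ∑ i : Fin n,
              (if enc k j = b then y j else 0) * (if enc k i = a then x i else 0)) * Had a b := by
            rw [hu, hv, Finset.sum_mul_sum]
        _ = _ := by
            rw [Finset.sum_mul]
            exact Finset.sum_congr rfl fun j _ => Finset.sum_mul _ _ _
    simp_rw [h1]
    rw [sum_swap4 (fun a b j i =>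
      (if enc k j = b then y j else 0) * (if enc k i = a then x i else 0) * Had a b)]
    refine Finset.sum_comm.trans ?_
    refine Finset.sum_congr rfl fun i _ => Finset.sum_congr rfl fun j _ => ?_
    rw [Finset.sum_comm]
    simp only [ite_mul, zero_mul, mul_ite, mul_zero, Finset.sum_ite_eq, Finset.mem_univ, if_true]
    ring
  have squares : ∀ z : Fin n → ℤ,
      (∑ c : Fin k → Bool, (∑ i, if enc k i = c then z i else 0) ^ 2) = ∑ i, z i ^ 2 := by
    intro z
    have h1 : ∀ c : Fin k → Bool, (∑ i, if enc k i = c then z i else 0) ^ 2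
        = ∑ i : Fin n, ∑ i' : Fin n,
            (if enc k i = c then z i else 0) * (if enc k i' = c then z i' else 0) := by
      intro c; rw [sq, Finset.sum_mul_sum]
    simp_rw [h1]
    rw [sum_swap3 (fun c i i' =>
      (if enc k i = c then z i else 0) * (if enc k i' = c then z i' else 0))]
    rw [sum_swap3 (fun i' c i =>
      (if enc k i = c then z i else 0) * (if enc k i' = c then z i' else 0))]
    have h2 : ∀ i i' : Fin n, (∑ c : Fin k → Bool,
        (if enc k i = c then z i else 0) * (if enc k i' = c then z i' else 0))
        = if i' = i then z i * z i else 0 := by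
      intro i i'
      simp only [ite_mul, zero_mul, mul_ite, mul_zero, Finset.sum_ite_eq,
        Finset.mem_univ, if_true]
      by_cases h : i' = i
      · subst h; simp
      · rw [if_neg (fun hc : enc k i = enc k i' => h (enc_inj hk hc).symm), if_neg h]
    calc (∑ i : Fin n, ∑ i' : Fin n, ∑ c : Fin k → Bool,
          (if enc k i = c then z i else 0) * (if enc k i' = c then z i' else 0))
        = ∑ i : Fin n, ∑ i' : Fin n, if i' = i then z i * z i else 0 :=
          Finset.sum_congr rfl fun i _ => Finset.sum_congr rfl fun i' _ => h2 i i'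
      _ = ∑ i, z i ^ 2 := by simp [sq]
  rw [← key, ← squares x, ← squares y]
  exact lindsey u v

/-- Fix `0 < δ < 1`. With only the row switches `x_i` for `i < (1-δ)n` and
column switches `y_j` for `j < (1-δ)n` available (the rest fixed to `+1`),
there is a constant `c(δ) > 0` such that for all sufficiently large `n` some
`±1` matrix has discrepancy at most `-c(δ)·n²` for all available switch
settings. -/
theorem stmt_14 (δ : ℝ) (hδ0 : 0 < δ) (hδ1 : δ < 1) :
    ∃ c : ℝ, 0 < c ∧ ∃ N : ℕ, ∀ n : ℕ, N ≤ n →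
      ∃ a : Fin n → Fin n → ℤ, (∀ i j, a i j = 1 ∨ a i j = -1) ∧
        ∀ x y : Fin n → ℤ,
          (∀ i, x i = 1 ∨ x i = -1) → (∀ j, y j = 1 ∨ y j = -1) →
          (∀ i : Fin n, (1 - δ) * n ≤ (i : ℝ) → x i = 1) →
          (∀ j : Fin n, (1 - δ) * n ≤ (j : ℝ) → y j = 1) →
          ((∑ i, ∑ j, a i j * x i * y j : ℤ) : ℝ) ≤ -c * (n : ℝ) ^ 2 := by
  obtain ⟨N, hN⟩ := exists_nat_gt (max (4 / δ) (128 / δ ^ 4))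
  refine ⟨δ ^ 2 / 4, by positivity, N + 1, fun n hn => ?_⟩
  have hNn : (N : ℝ) ≤ n := by exact_mod_cast Nat.le_of_succ_le hn
  have hmax : max (4 / δ) (128 / δ ^ 4) < (n : ℝ) := lt_of_lt_of_le hN hNn
  have hn4 : 4 / δ < (n : ℝ) := lt_of_le_of_lt (le_max_left _ _) hmax
  have hn128 : 128 / δ ^ 4 < (n : ℝ) := lt_of_le_of_lt (le_max_right _ _) hmax
  have hδn : (4 : ℝ) < δ * n := by
    rw [div_lt_iff₀ hδ0] at hn4; linarith
  have hnR0 : (0 : ℝ) < n := lt_trans (by positivity) hn4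
  have hn0 : n ≠ 0 := by
    intro h; rw [h] at hnR0; norm_num at hnR0
  -- choose k with n ≤ 2^k ≤ 2n
  set k := Nat.log 2 n + 1 with hkdef
  have hk : n ≤ 2 ^ k := le_of_lt (Nat.lt_pow_succ_log_self (by norm_num) n)
  have hk2 : (2 : ℤ) ^ k ≤ 2 * n := by
    have h := Nat.pow_log_le_self 2 hn0
    have : (2:ℕ) ^ k ≤ 2 * n := by
      rw [hkdef, pow_succ, mul_comm]
      exact Nat.mul_le_mul_left 2 h
    exact_mod_cast this
  set t := ⌈(1 - δ) * n⌉₊ with htdef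
  have h1δ : (0:ℝ) ≤ (1 - δ) * n := mul_nonneg (by linarith) (le_of_lt hnR0)
  have htn : t ≤ n := Nat.ceil_le.mpr (by nlinarith)
  have ht_le : (t : ℝ) ≤ (1 - δ) * n + 1 := le_of_lt (Nat.ceil_lt_add_one h1δ)
  refine ⟨fun i j => if t ≤ (i : ℕ) ∧ t ≤ (j : ℕ) then -1 else Had (enc k i) (enc k j),
    fun i j => ?_, ?_⟩
  · dsimp only; split
    · right; rfl
    · exact Had_pm _ _
  intro x y hx1 hy1 hx hy
  set g : Fin n → ℤ := fun i => if t ≤ (i : ℕ) then 1 else 0 with hgdef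
  set S1 : ℤ := ∑ i : Fin n, ∑ j : Fin n, Had (enc k i) (enc k j) * x i * y j with hS1def
  set S2 : ℤ := ∑ i : Fin n, ∑ j : Fin n, Had (enc k i) (enc k j) * g i * g j with hS2def
  set m : ℤ := ∑ i : Fin n, g i with hmdef
  -- the key hypothesis transfer: t ≤ i implies the switch is fixed to 1
  have hxfix : ∀ i : Fin n, t ≤ (i : ℕ) → x i = 1 := by
    intro i hi
    exact hx i (le_trans (Nat.le_ceil _) (by exact_mod_cast hi))
  have hyfix : ∀ j : Fin n, t ≤ (j : ℕ) → y j = 1 := by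
    intro j hj
    exact hy j (le_trans (Nat.le_ceil _) (by exact_mod_cast hj))
  -- pointwise decomposition
  have hpt : ∀ i j : Fin n,
      (if t ≤ (i : ℕ) ∧ t ≤ (j : ℕ) then (-1 : ℤ) else Had (enc k i) (enc k j)) * x i * y j
        = Had (enc k i) (enc k j) * x i * y j - g i * g j
            - Had (enc k i) (enc k j) * g i * g j := by
    intro i j
    by_cases h : t ≤ (i : ℕ) ∧ t ≤ (j : ℕ)
    · rw [if_pos h, hxfix i h.1, hyfix j h.2, hgdef]
      simp only [if_pos h.1, if_pos h.2]
      ring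
    · rw [if_neg h, hgdef]
      simp only
      rcases not_and_or.mp h with h' | h'
      · rw [if_neg h']; ring
      · rw [if_neg h']; ring
  have hT : (∑ i : Fin n, ∑ j : Fin n,
      (if t ≤ (i : ℕ) ∧ t ≤ (j : ℕ) then (-1 : ℤ) else Had (enc k i) (enc k j)) * x i * y j)
        = S1 - m * m - S2 := by
    simp_rw [hpt]
    rw [hS1def, hS2def, hmdef]
    conv_rhs => rw [Finset.sum_mul_sum]
    simp [Finset.sum_sub_distrib]
  -- bounds
  have hx2 : (∑ i, x i ^ 2) = (n : ℤ) := by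
    have : ∀ i, x i ^ 2 = 1 := fun i => by rcases hx1 i with h | h <;> rw [h] <;> norm_num
    simp [this]
  have hy2 : (∑ j, y j ^ 2) = (n : ℤ) := by
    have : ∀ j, y j ^ 2 = 1 := fun j => by rcases hy1 j with h | h <;> rw [h] <;> norm_num
    simp [this]
  have hg2 : (∑ i, g i ^ 2) ≤ (n : ℤ) := by
    calc (∑ i, g i ^ 2) ≤ ∑ _i : Fin n, (1 : ℤ) := by
          refine Finset.sum_le_sum fun i _ => ?_
          rw [hgdef]; dsimp only; split <;> norm_num
      _ = n := by simp
  have hg2nonneg : (0 : ℤ) ≤ ∑ i, g i ^ 2 := Finset.sum_nonneg fun i _ => sq_nonneg _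
  have hnn : (0 : ℤ) ≤ (n : ℤ) := Int.natCast_nonneg n
  have hS1b : S1 ^ 2 ≤ 2 * (n : ℤ) ^ 3 := by
    calc S1 ^ 2 ≤ 2 ^ k * (∑ i, x i ^ 2) * (∑ j, y j ^ 2) := lindsey_fin hk x y
      _ = 2 ^ k * n * n := by rw [hx2, hy2]
      _ ≤ (2 * n) * n * n := by
          have := mul_le_mul_of_nonneg_right (mul_le_mul_of_nonneg_right hk2 hnn) hnn
          exact this
      _ = 2 * (n : ℤ) ^ 3 := by ring
  have hS2b : S2 ^ 2 ≤ 2 * (n : ℤ) ^ 3 := by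
    calc S2 ^ 2 ≤ 2 ^ k * (∑ i, g i ^ 2) * (∑ j, g j ^ 2) := lindsey_fin hk g g
      _ ≤ (2 * n) * n * n := by
          have h2k : (0:ℤ) ≤ 2 ^ k := by positivity
          exact mul_le_mul (mul_le_mul hk2 hg2 hg2nonneg (by linarith)) hg2 hg2nonneg
            (by nlinarith)
      _ = 2 * (n : ℤ) ^ 3 := by ring
  -- value of m
  have hmcard : m = ((n - t : ℕ) : ℤ) := by
    rw [hmdef, hgdef]
    rw [Fin.sum_univ_eq_sum_range (fun i => if t ≤ i then (1 : ℤ) else 0)]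
    rw [Finset.sum_boole]
    congr 1
    rw [show (Finset.range n).filter (fun i => t ≤ i) = Finset.Ico t n by
      ext j; simp [Finset.mem_Ico, and_comm]]
    exact Nat.card_Ico t n
  have hmR : (m : ℝ) = (n : ℝ) - t := by
    rw [hmcard]
    push_cast [Nat.cast_sub htn]
    ring
  have hmlb : δ * n - 1 ≤ (m : ℝ) := by rw [hmR]; linarith
  have hm34 : (3 / 4) * (δ * n) ≤ (m : ℝ) := by linarith
  have hm2 : ((3 / 4) * (δ * n)) ^ 2 ≤ ((m : ℝ)) ^ 2 := by
    have h0 : (0:ℝ) ≤ (3 / 4) * (δ * n) := by positivity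
    exact pow_le_pow_left₀ h0 hm34 2
  -- real bounds on S1, S2
  have hB : ∀ S : ℤ, S ^ 2 ≤ 2 * (n : ℤ) ^ 3 → |(S : ℝ)| ≤ δ ^ 2 / 8 * (n : ℝ) ^ 2 := by
    intro S hS
    have hSR : (S : ℝ) ^ 2 ≤ 2 * (n : ℝ) ^ 3 := by exact_mod_cast hS
    have h128 : (128 : ℝ) < n * δ ^ 4 := by
      rw [div_lt_iff₀ (by positivity)] at hn128; linarith
    have hkey : 2 * (n : ℝ) ^ 3 ≤ (δ ^ 2 / 8 * (n : ℝ) ^ 2) ^ 2 := by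
      have h1 : (0:ℝ) ≤ (n:ℝ) ^ 3 / 64 := by positivity
      calc 2 * (n : ℝ) ^ 3 = 128 * ((n:ℝ) ^ 3 / 64) := by ring
        _ ≤ (n * δ ^ 4) * ((n:ℝ) ^ 3 / 64) := mul_le_mul_of_nonneg_right (le_of_lt h128) h1
        _ = (δ ^ 2 / 8 * (n : ℝ) ^ 2) ^ 2 := by ring
    have := Real.sqrt_le_sqrt (le_trans hSR hkey)
    rwa [Real.sqrt_sq_eq_abs, Real.sqrt_sq (by positivity)] at this
  have hS1R := hB S1 hS1b
  have hS2R := hB S2 hS2b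
  -- conclude
  have hcast : ((∑ i : Fin n, ∑ j : Fin n,
      (if t ≤ (i : ℕ) ∧ t ≤ (j : ℕ) then (-1 : ℤ) else Had (enc k i) (enc k j)) * x i * y j : ℤ) : ℝ)
      = (S1 : ℝ) - (m : ℝ) ^ 2 - (S2 : ℝ) := by
    rw [hT]; push_cast; ring
  rw [hcast]
  have h1 : (S1 : ℝ) ≤ δ ^ 2 / 8 * (n : ℝ) ^ 2 := le_trans (le_abs_self _) hS1R
  have h2 : -(S2 : ℝ) ≤ δ ^ 2 / 8 * (n : ℝ) ^ 2 := le_trans (neg_le_abs _) hS2R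
  linarith [hm2, h1, h2, sq_nonneg (δ * (n : ℝ))]
end

section
/- Let H = {(i,j) ∈ {1,...,n}² : i·j ≤ n} be the board under the hyperbola xy = n. Then the maximum discrepancy F(H) is Ω(n) and O(n·(log n)^{1/2}). -/
/-!
For the lower bound, take `y` to be the first row of the colouring (which has length `n` and
lies entirely on the board) and choose each `x i` as the sign of the `i`-th row sum; the total is
then the sum of the absolute row sums, at least the first one, which equals `n`.

For the upper bound, a uniformly random colouring `a` is used. For fixed switches `x, y` the sum
`∑ a p x_i y_j` is a Rademacher sum of `|H| ≤ n (1 + log n) ≤ 2 n log n` terms, so by the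
Chernoff bound `cosh t ≤ exp (t² / 2)` it exceeds `λ = 4 n √(log n)` for at most a fraction
`exp (-λ² / (2 · 2 n log n)) = exp (-4 n)` of the colourings. Since there are only
`4 ^ n < exp (4 n)` pairs of switches, some colouring is good for all of them.
-/

/-- The hyperbolic board: lattice points `(i,j)` of the `n × n` grid
(1-indexed) with `i·j ≤ n`. -/
def hypBoard (n : ℕ) : Finset (Fin n × Fin n) :=
  Finset.univ.filter (fun p => ((p.1 : ℕ) + 1) * ((p.2 : ℕ) + 1) ≤ n)

open Finset Real

def signVectors (ι : Type*) [Fintype ι] [DecidableEq ι] : Finset (ι → ℤ) :=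
  Fintype.piFinset fun _ => {1, -1}

section SignVectors

variable {ι : Type*} [Fintype ι] [DecidableEq ι]

@[simp]
lemma mem_signVectors {ε : ι → ℤ} : ε ∈ signVectors ι ↔ ∀ i, ε i = 1 ∨ ε i = -1 := by
  simp [signVectors]

lemma card_signVectors : #(signVectors ι) = 2 ^ Fintype.card ι := by
  rw [signVectors, Fintype.card_piFinset]
  simp

lemma sum_signVectors_exp (c : ι → ℝ) :
    ∑ ε ∈ signVectors ι, exp (∑ i, ε i * c i) = ∏ i, 2 * cosh (c i) := by
  simp_rw [exp_sum]
  rw [signVectors, ← prod_univ_sum (fun _ => {1, -1}) fun i (e : ℤ) => exp (e * c i)]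
  refine prod_congr rfl fun i _ => ?_
  rw [cosh_eq, sum_pair (by decide)]
  push_cast
  rw [one_mul, neg_one_mul]
  ring

lemma sum_signVectors_exp_le (c : ι → ℝ) :
    ∑ ε ∈ signVectors ι, exp (∑ i, ε i * c i) ≤ 2 ^ Fintype.card ι * exp ((∑ i, c i ^ 2) / 2) := by
  rw [sum_signVectors_exp, sum_div, exp_sum, ← card_univ, ← prod_const, ← prod_mul_distrib]
  exact prod_le_prod (fun i _ => by positivity) fun i _ =>
    mul_le_mul_of_nonneg_left (cosh_le_exp_half_sq _) zero_le_two

/-- Markov's inequality for `exp (t S)`, with the optimal `t = λ / A`. -/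
lemma card_signVectors_filter_le_sum_le (c : ι → ℝ) {A lam : ℝ} (hA : 0 < A)
    (hc : ∑ i, c i ^ 2 ≤ A) (hlam : 0 ≤ lam) :
    (#{ε ∈ signVectors ι | lam ≤ ∑ i, ε i * c i} : ℝ) ≤
      2 ^ Fintype.card ι * exp (-(lam ^ 2 / (2 * A))) := by
  set t := lam / A
  have ht : 0 ≤ t := div_nonneg hlam hA.le
  have markov : (#{ε ∈ signVectors ι | lam ≤ ∑ i, ε i * c i} : ℝ) * exp (t * lam) ≤
      ∑ ε ∈ signVectors ι, exp (∑ i, ε i * (t * c i)) := by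
    rw [← nsmul_eq_mul, ← sum_const]
    refine (sum_le_sum fun ε hε => exp_le_exp.mpr ?_).trans
      (sum_le_sum_of_subset_of_nonneg (filter_subset _ _) fun _ _ _ => (exp_pos _).le)
    simp_rw [mul_left_comm _ t, ← mul_sum]
    exact mul_le_mul_of_nonneg_left (mem_filter.mp hε).2 ht
  have hmgf := sum_signVectors_exp_le fun i => t * c i
  have hvar : (∑ i, (t * c i) ^ 2) / 2 ≤ t ^ 2 * A / 2 := by
    simp_rw [mul_pow, ← mul_sum]
    gcongr
  have hexp : t ^ 2 * A / 2 - t * lam = -(lam ^ 2 / (2 * A)) := by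
    simp only [t]
    field_simp
    ring
  rw [← hexp, exp_sub, ← mul_div_assoc, le_div_iff₀ (exp_pos _)]
  exact markov.trans (hmgf.trans (by gcongr))

lemma card_signVectors_filter_le_sum_finset_le (s : Finset ι) {w : ι → ℤ}
    (hw : ∀ i ∈ s, w i = 1 ∨ w i = -1) {A lam : ℝ} (hA : 0 < A) (hs : #s ≤ A) (hlam : 0 ≤ lam) :
    (#{ε ∈ signVectors ι | lam ≤ ((∑ i ∈ s, ε i * w i : ℤ) : ℝ)} : ℝ) ≤
      2 ^ Fintype.card ι * exp (-(lam ^ 2 / (2 * A))) := by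
  let c : ι → ℝ := fun i => if i ∈ s then (w i : ℝ) else 0
  have hsum : ∀ ε : ι → ℤ, ((∑ i ∈ s, ε i * w i : ℤ) : ℝ) = ∑ i, ε i * c i := fun ε => by
    simp only [c, mul_ite, mul_zero, Fintype.sum_ite_mem]
    push_cast
    rfl
  have hc : ∑ i, c i ^ 2 = #s := by
    simp only [c, ite_pow, zero_pow two_ne_zero, Fintype.sum_ite_mem]
    rw [card_eq_sum_ones]
    push_cast
    exact sum_congr rfl fun i hi => by rcases hw i hi with h | h <;> simp [h]
  simp only [hsum]
  exact card_signVectors_filter_le_sum_le c hA (hc ▸ hs) hlam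

end SignVectors

lemma Finset.exists_mem_forall_notMem_of_sum_card_lt {α κ : Type*} [DecidableEq α]
    {U : Finset α} {K : Finset κ} (B : κ → Finset α) (h : ∑ k ∈ K, #(B k) < #U) :
    ∃ u ∈ U, ∀ k ∈ K, u ∉ B k := by
  by_contra! hcover
  have hsub : U ⊆ K.biUnion B := fun u hu => mem_biUnion.mpr (hcover u hu)
  exact (card_le_card hsub |>.trans card_biUnion_le).not_gt h

lemma exists_signVectors_abs_row_le {ι κ : Type*} [Fintype ι] [DecidableEq ι] [Fintype κ]
    [DecidableEq κ] (s : Finset (ι × κ)) (a : ι × κ → ℤ) (y : κ → ℤ) (i₀ : ι) :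
    ∃ x ∈ signVectors ι,
      |∑ j with (i₀, j) ∈ s, a (i₀, j) * y j| ≤ ∑ p ∈ s, a p * x p.1 * y p.2 := by
  set R : ι → ℤ := fun i => ∑ j with (i, j) ∈ s, a (i, j) * y j
  set x : ι → ℤ := fun i => if 0 ≤ R i then 1 else -1
  have hx : ∀ i, x i * R i = |R i| := fun i => by
    by_cases h : 0 ≤ R i
    · simp [x, h, abs_of_nonneg h]
    · simp [x, h, abs_of_neg (not_le.mp h)]
  refine ⟨x, mem_signVectors.mpr fun i => by by_cases h : 0 ≤ R i <;> simp [x, h], ?_⟩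
  have hrows : ∑ p ∈ s, a p * x p.1 * y p.2 = ∑ i, x i * R i := by
    rw [sum_finset_product s univ (fun i => {j | (i, j) ∈ s}) (by simp)]
    simp_rw [R, mul_sum]
    exact sum_congr rfl fun i _ => sum_congr rfl fun j _ => by ring
  rw [hrows]
  simp_rw [hx]
  exact single_le_sum (f := fun i => |R i|) (fun i _ => abs_nonneg _) (mem_univ i₀)

lemma mem_hypBoard {n : ℕ} {p : Fin n × Fin n} :
    p ∈ hypBoard n ↔ ((p.1 : ℕ) + 1) * ((p.2 : ℕ) + 1) ≤ n := by
  simp [hypBoard]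

lemma card_hypBoard (n : ℕ) : #(hypBoard n) = ∑ i ∈ range n, n / (i + 1) := by
  have hrow : ∀ i : Fin n, #{j : Fin n | (i, j) ∈ hypBoard n} = n / (i + 1) := fun i => by
    have : ∀ j : Fin n, (i, j) ∈ hypBoard n ↔ (j : ℕ) < n / (i + 1) := fun j => by
      rw [mem_hypBoard, Nat.lt_iff_add_one_le, Nat.le_div_iff_mul_le (Nat.succ_pos _), mul_comm]
    rw [filter_congr fun j _ => this j, Fin.card_filter_val_lt]
    exact min_eq_right (Nat.div_le_self _ _)
  rw [card_eq_sum_ones, sum_finset_product _ univ (fun i => {j | (i, j) ∈ hypBoard n}) (by simp)]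
  simp_rw [← card_eq_sum_ones, hrow]
  exact Fin.sum_univ_eq_sum_range (fun i => n / (i + 1)) n

lemma card_hypBoard_le (n : ℕ) : (#(hypBoard n) : ℝ) ≤ n * (1 + log n) := by
  calc (#(hypBoard n) : ℝ) ≤ ∑ i ∈ range n, (n : ℝ) / (i + 1) := by
        rw [card_hypBoard]
        push_cast
        exact sum_le_sum fun i _ => by exact_mod_cast Nat.cast_div_le (α := ℝ)
    _ = n * harmonic n := by
        rw [harmonic]
        push_cast
        rw [mul_sum]
        exact sum_congr rfl fun i _ => by ring
    _ ≤ n * (1 + log n) := by gcongr; exact harmonic_le_one_add_log n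

lemma exists_signVectors_le_sum_hypBoard (n : ℕ) (a : Fin n × Fin n → ℤ)
    (ha : ∀ p ∈ hypBoard n, a p = 1 ∨ a p = -1) :
    ∃ x ∈ signVectors (Fin n), ∃ y ∈ signVectors (Fin n),
      (n : ℤ) ≤ ∑ p ∈ hypBoard n, a p * x p.1 * y p.2 := by
  rcases Nat.eq_zero_or_pos n with rfl | hn
  · exact ⟨1, by simp, 1, by simp, by simp [hypBoard]⟩
  let i₀ : Fin n := ⟨0, hn⟩
  have hfirst : ∀ j : Fin n, (i₀, j) ∈ hypBoard n := fun j => by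
    simp [mem_hypBoard, i₀, Nat.succ_le_of_lt j.isLt]
  let y : Fin n → ℤ := fun j => a (i₀, j)
  have hrow : ∑ j with (i₀, j) ∈ hypBoard n, a (i₀, j) * y j = n := by
    rw [filter_true_of_mem fun j _ => hfirst j]
    simp only [y]
    rw [sum_congr rfl fun j _ => show a (i₀, j) * a (i₀, j) = 1 by
      rcases ha _ (hfirst j) with h | h <;> simp [h]]
    simp
  obtain ⟨x, hx, hle⟩ := exists_signVectors_abs_row_le (hypBoard n) a y i₀
  refine ⟨x, hx, y, mem_signVectors.mpr fun j => ha _ (hfirst j), ?_⟩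
  rw [hrow] at hle
  simpa using hle

lemma exists_signVectors_sum_hypBoard_lt (n : ℕ) (hn : 3 ≤ n) :
    ∃ a ∈ signVectors (Fin n × Fin n), ∀ x ∈ signVectors (Fin n), ∀ y ∈ signVectors (Fin n),
      ((∑ p ∈ hypBoard n, a p * x p.1 * y p.2 : ℤ) : ℝ) < 4 * n * √(log n) := by
  have hn0 : (0 : ℝ) < n := by exact_mod_cast (show 0 < n by omega)
  have hlog : 1 ≤ log n := by
    rw [le_log_iff_exp_le hn0]
    calc exp 1 ≤ 3 := (exp_one_lt_d9.trans_le (by norm_num)).le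
      _ ≤ n := by exact_mod_cast hn
  set lam := 4 * n * √(log n)
  set A := 2 * n * log n
  have hA : 0 < A := by positivity
  have hcard : (#(hypBoard n) : ℝ) ≤ A := (card_hypBoard_le n).trans (by nlinarith)
  have hexponent : lam ^ 2 / (2 * A) = 4 * n := by
    simp only [lam, A]
    rw [mul_pow, sq_sqrt (by positivity)]
    field_simp
    ring
  let bad : (Fin n → ℤ) × (Fin n → ℤ) → Finset (Fin n × Fin n → ℤ) := fun xy =>
    {a ∈ signVectors _ | lam ≤ ((∑ p ∈ hypBoard n, a p * (xy.1 p.1 * xy.2 p.2) : ℤ) : ℝ)}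
  have hbad : ∀ xy ∈ signVectors (Fin n) ×ˢ signVectors (Fin n),
      (#(bad xy) : ℝ) ≤ 2 ^ (n * n) * exp (-(4 * n)) := by
    rintro ⟨x, y⟩ hxy
    simp only [mem_product, mem_signVectors] at hxy
    have hw : ∀ p ∈ hypBoard n, x p.1 * y p.2 = 1 ∨ x p.1 * y p.2 = -1 := fun p _ => by
      rcases hxy.1 p.1 with h | h <;> rcases hxy.2 p.2 with h' | h' <;> simp [h, h']
    have htail := card_signVectors_filter_le_sum_finset_le _ hw hA hcard (lam := lam) (by positivity)
    rwa [hexponent, Fintype.card_prod, Fintype.card_fin] at htail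
  have hunion : ∑ xy ∈ signVectors (Fin n) ×ˢ signVectors (Fin n), #(bad xy) <
      #(signVectors (Fin n × Fin n)) := by
    have : (∑ xy ∈ signVectors (Fin n) ×ˢ signVectors (Fin n), #(bad xy) : ℝ) <
        #(signVectors (Fin n × Fin n)) := by
      refine (sum_le_card_nsmul _ _ _ hbad).trans_lt ?_
      simp only [card_product, card_signVectors, Fintype.card_prod, Fintype.card_fin, nsmul_eq_mul]
      push_cast
      rw [exp_neg, mul_comm 4 (n : ℝ), exp_nat_mul, ← mul_pow, mul_left_comm, ← div_eq_mul_inv,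
        ← div_pow, mul_lt_iff_lt_one_right (by positivity)]
      refine pow_lt_one₀ (by positivity) ?_ (by omega)
      rw [div_lt_one (exp_pos 4)]
      linarith [add_one_le_exp 4]
    exact_mod_cast this
  obtain ⟨a, ha, hgood⟩ := exists_mem_forall_notMem_of_sum_card_lt bad hunion
  refine ⟨a, ha, fun x hx y hy => ?_⟩
  have := hgood (x, y) (mem_product.mpr ⟨hx, hy⟩)
  simpa [bad, ha, mul_assoc] using this

/-- For the board under the hyperbola `xy = n`, the maximum discrepancy is
`Ω(n)` and `O(n (log n)^(1/2))`. -/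
theorem stmt_17 :
    (∃ c : ℝ, 0 < c ∧ ∀ n : ℕ,
      ∀ a : Fin n × Fin n → ℤ, (∀ p ∈ hypBoard n, a p = 1 ∨ a p = -1) →
        ∃ x y : Fin n → ℤ,
          (∀ i, x i = 1 ∨ x i = -1) ∧ (∀ j, y j = 1 ∨ y j = -1) ∧
          c * (n : ℝ) ≤ ((∑ p ∈ hypBoard n, a p * x p.1 * y p.2 : ℤ) : ℝ)) ∧
    (∃ C : ℝ, 0 < C ∧ ∃ N : ℕ, ∀ n : ℕ, N ≤ n →
      ∃ a : Fin n × Fin n → ℤ, (∀ p ∈ hypBoard n, a p = 1 ∨ a p = -1) ∧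
        ∀ x y : Fin n → ℤ,
          (∀ i, x i = 1 ∨ x i = -1) → (∀ j, y j = 1 ∨ y j = -1) →
          ((∑ p ∈ hypBoard n, a p * x p.1 * y p.2 : ℤ) : ℝ)
            ≤ C * (n : ℝ) * Real.sqrt (Real.log n)) := by
  refine ⟨⟨1, one_pos, fun n a ha => ?_⟩, ⟨4, by norm_num, 3, fun n hn => ?_⟩⟩
  · obtain ⟨x, hx, y, hy, hle⟩ := exists_signVectors_le_sum_hypBoard n a ha
    exact ⟨x, y, mem_signVectors.mp hx, mem_signVectors.mp hy, by rw [one_mul]; exact_mod_cast hle⟩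
  · obtain ⟨a, ha, hlt⟩ := exists_signVectors_sum_hypBoard_lt n hn
    exact ⟨a, fun p _ => mem_signVectors.mp ha p, fun x y hx hy =>
      (hlt x (mem_signVectors.mpr hx) y (mem_signVectors.mpr hy)).le⟩
end

section
/- For every ±1 assignment on H = {(i,j) : i·j ≤ n, 1 ≤ i,j ≤ n}, there exist row switches x ∈ {±1}^n and column switches y ∈ {±1}^n such that ∑_{(i,j)∈H} a_{ij} x_i y_j ≥ n. -/
open Finset

theorem exists_sign_mul_eq_abs (r : ℤ) : ∃ s : ℤ, (s = 1 ∨ s = -1) ∧ s * r = |r| := by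
  rcases le_or_gt 0 r with hr | hr
  · exact ⟨1, Or.inl rfl, by rw [one_mul, abs_of_nonneg hr]⟩
  · exact ⟨-1, Or.inr rfl, by rw [neg_one_mul, abs_of_neg hr]⟩

theorem exists_signs_sum_mul_eq_sum_abs {ι : Type*} [Fintype ι] (f : ι → ℤ) :
    ∃ x : ι → ℤ, (∀ i, x i = 1 ∨ x i = -1) ∧ ∑ i, x i * f i = ∑ i, |f i| := by
  choose x hx hxf using fun i => exists_sign_mul_eq_abs (f i)
  exact ⟨x, hx, sum_congr rfl fun i _ => hxf i⟩

section Board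

variable {ι κ : Type*} [Fintype ι] [Fintype κ] [DecidableEq ι] [DecidableEq κ]

theorem sum_board_eq_sum_rows (s : Finset (ι × κ)) (a : ι × κ → ℤ) (x : ι → ℤ) (y : κ → ℤ) :
    ∑ p ∈ s, a p * x p.1 * y p.2 = ∑ i, x i * ∑ j with (i, j) ∈ s, a (i, j) * y j := by
  simp_rw [mul_sum, sum_filter]
  rw [← Fintype.sum_prod_type', ← sum_filter, filter_univ_mem]
  exact sum_congr rfl fun p _ => by ring

theorem exists_switches_card_le_of_full_row (s : Finset (ι × κ)) (a : ι × κ → ℤ)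
    (ha : ∀ p ∈ s, a p = 1 ∨ a p = -1) (i₀ : ι) (hrow : ∀ j, (i₀, j) ∈ s) :
    ∃ x : ι → ℤ, ∃ y : κ → ℤ, (∀ i, x i = 1 ∨ x i = -1) ∧ (∀ j, y j = 1 ∨ y j = -1) ∧
      (Fintype.card κ : ℤ) ≤ ∑ p ∈ s, a p * x p.1 * y p.2 := by
  set y : κ → ℤ := fun j => a (i₀, j)
  have hy : ∀ j, y j = 1 ∨ y j = -1 := fun j => ha _ (hrow j)
  set r : ι → ℤ := fun i => ∑ j with (i, j) ∈ s, a (i, j) * y j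
  have hr₀ : r i₀ = Fintype.card κ := by
    have hfilter : ({j | (i₀, j) ∈ s} : Finset κ) = univ := filter_true_of_mem fun j _ => hrow j
    calc r i₀ = ∑ _j : κ, (1 : ℤ) := by
          simp only [r, hfilter]
          exact sum_congr rfl fun j _ => by rcases hy j with h | h <;> simp [y, h]
      _ = Fintype.card κ := by simp
  obtain ⟨x, hx, hxr⟩ := exists_signs_sum_mul_eq_sum_abs r
  refine ⟨x, y, hx, hy, ?_⟩
  calc (Fintype.card κ : ℤ) = |r i₀| := by rw [hr₀, abs_of_nonneg (Nat.cast_nonneg _)]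
    _ ≤ ∑ i, |r i| := single_le_sum (fun i _ => abs_nonneg (r i)) (mem_univ i₀)
    _ = ∑ p ∈ s, a p * x p.1 * y p.2 := by rw [sum_board_eq_sum_rows, hxr]

end Board

/-- For every `±1` assignment on the hyperbolic board there are switch
settings achieving discrepancy at least `n`. -/
theorem stmt_18 (n : ℕ) (a : Fin n × Fin n → ℤ)
    (ha : ∀ p ∈ hypBoard n, a p = 1 ∨ a p = -1) :
    ∃ x y : Fin n → ℤ,
      (∀ i, x i = 1 ∨ x i = -1) ∧ (∀ j, y j = 1 ∨ y j = -1) ∧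
      (n : ℤ) ≤ ∑ p ∈ hypBoard n, a p * x p.1 * y p.2 := by
  cases n with
  | zero =>
    exact ⟨1, 1, fun _ => Or.inl rfl, fun _ => Or.inl rfl,
      by simp [eq_empty_of_isEmpty (hypBoard 0)]⟩
  | succ m =>
    have hrow : ∀ j, ((0 : Fin (m + 1)), j) ∈ hypBoard (m + 1) := fun j => by
      simpa [hypBoard] using j.is_le
    simpa using exists_switches_card_le_of_full_row _ a ha 0 hrow
end
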